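/- arXiv:1901.01748 — 6 statements merged into one kernel-verified Lean document; each statement's English description precedes it below -/
import Mathlib

section
/- Let T be an n×n real matrix (n ≥ 1) such that (1) every column sum of T is positive, and (2) there exists a positive integer k such that T^k is entrywise nonnegative and irreducible. Then there exists a nonzero row vector x ∈ ℝ^n with all entries nonnegative satisfying x T = ρ(T) x, where ρ(T) is the spectral radius of T. -/
/-!
`S = T ^ k` is irreducible, so maximising the Collatz–Wielandt ratio over the simplex gives
positive left and right eigenvectors `y`, `w` of `S`, and its eigenspace through a positive
vector is one-dimensional. Since `T` commutes with `S`, this forces `y T = t y` and `T w = t w`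
for one real `t`, and pairing `T w = t w` with the all-ones vector shows, by the positive column
sums, that `t > 0`. A complex eigenvalue `μ` of `T` makes `μ ^ k` an eigenvalue of `S`, and
testing an eigenvector of absolute values against `y` gives `‖μ‖ ^ k ≤ t ^ k`. Hence `t` is the
spectral radius.
-/

open Finset

namespace Matrix

variable {ι : Type*} [Fintype ι]

section Eigen

variable {R : Type*} [CommSemiring R] [DecidableEq ι]

theorem vecMul_pow_eq_pow_smul {A : Matrix ι ι R} {v : ι → R} {μ : R} (h : v ᵥ* A = μ • v)
    (m : ℕ) : v ᵥ* A ^ m = μ ^ m • v := by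
  induction m with
  | zero => simp
  | succ m ih => rw [pow_succ, ← vecMul_vecMul, ih, smul_vecMul, h, smul_smul, pow_succ]

theorem pow_mulVec_eq_pow_smul {A : Matrix ι ι R} {v : ι → R} {μ : R} (h : A *ᵥ v = μ • v)
    (m : ℕ) : A ^ m *ᵥ v = μ ^ m • v := by
  rw [← vecMul_transpose, transpose_pow]
  exact vecMul_pow_eq_pow_smul (by rwa [vecMul_transpose]) m

end Eigen

section Charpoly

variable {K : Type*} [Field K] [DecidableEq ι]

theorem isRoot_charpoly_iff_exists_mulVec_eq_smul (A : Matrix ι ι K) (μ : K) :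
    A.charpoly.IsRoot μ ↔ ∃ v ≠ 0, A *ᵥ v = μ • v := by
  simp only [Polynomial.IsRoot, eval_charpoly, ← exists_mulVec_eq_zero_iff, sub_mulVec,
    scalar_apply, diagonal_const_mulVec, sub_eq_zero, eq_comm (a := A *ᵥ _)]

theorem isRoot_charpoly_of_vecMul_eq_smul {A : Matrix ι ι K} {μ : K} {v : ι → K} (hv : v ≠ 0)
    (h : v ᵥ* A = μ • v) : A.charpoly.IsRoot μ := by
  rw [← charpoly_transpose]
  exact (isRoot_charpoly_iff_exists_mulVec_eq_smul _ _).2 ⟨v, hv, by rwa [mulVec_transpose]⟩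

end Charpoly

section Nonneg

theorem exists_pos_smul_le [Nonempty ι] {a b : ι → ℝ} (ha : ∀ i, 0 < a i)
    (hb : ∀ i, 0 < b i) : ∃ ε : ℝ, 0 < ε ∧ ε • a ≤ b := by
  obtain ⟨j, hj⟩ := Finite.exists_min fun i => b i / a i
  exact ⟨b j / a j, div_pos (hb j) (ha j), fun i => (le_div_iff₀ (ha i)).1 (hj i)⟩

theorem vecMul_apply_pos {P : Matrix ι ι ℝ} (hP : ∀ i j, 0 < P i j) {u : ι → ℝ} (hu : 0 ≤ u)
    (hu0 : u ≠ 0) (j : ι) : 0 < (u ᵥ* P) j := by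
  obtain ⟨i, hi⟩ := Function.ne_iff.1 hu0
  exact sum_pos' (fun l _ => mul_nonneg (hu l) (hP l j).le)
    ⟨i, mem_univ i, mul_pos ((hu i).lt_of_ne' hi) (hP i j)⟩

theorem pos_of_mulVec_eq_smul [Nonempty ι] {T : Matrix ι ι ℝ} (hT : ∀ j, 0 < ∑ i, T i j)
    {w : ι → ℝ} (hw : ∀ i, 0 < w i) {t : ℝ} (h : T *ᵥ w = t • w) : 0 < t := by
  have hsum : (1 ᵥ* T) ⬝ᵥ w = t * (1 ⬝ᵥ w) := by
    rw [← dotProduct_mulVec, h, dotProduct_smul, smul_eq_mul]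
  refine pos_of_mul_pos_left (b := 1 ⬝ᵥ w) (hsum ▸ ?_)
    (sum_nonneg fun i _ => by simpa using (hw i).le)
  exact sum_pos (fun j _ => mul_pos (by simpa [vecMul, dotProduct] using hT j) (hw j))
    univ_nonempty

variable {S : Matrix ι ι ℝ}

/-- The Perron root of `S` is the largest first coordinate of a point of this set. -/
def collatzWielandtSet (S : Matrix ι ι ℝ) : Set (ℝ × (ι → ℝ)) :=
  {p | 0 ≤ p.1 ∧ p.2 ∈ stdSimplex ℝ ι ∧ p.1 • p.2 ≤ p.2 ᵥ* S}

theorem inv_sum_smul_mem_collatzWielandtSet {c : ℝ} {z : ι → ℝ} (hc : 0 ≤ c) (hz : 0 ≤ z)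
    (hsum : 0 < ∑ i, z i) (h : c • z ≤ z ᵥ* S) :
    (c, (∑ i, z i)⁻¹ • z) ∈ collatzWielandtSet S := by
  refine ⟨hc, ⟨fun i => mul_nonneg (inv_nonneg.2 hsum.le) (hz i), ?_⟩, ?_⟩
  · simp [← mul_sum, inv_mul_cancel₀ hsum.ne']
  · rw [smul_vecMul, smul_comm]
    exact smul_le_smul_of_nonneg_left h (inv_nonneg.2 hsum.le)

theorem collatzWielandtSet_nonempty [Nonempty ι] (hS : ∀ i j, 0 ≤ S i j) :
    (collatzWielandtSet S).Nonempty :=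
  ⟨_, inv_sum_smul_mem_collatzWielandtSet le_rfl (fun _ => zero_le_one)
    (by simp [Fintype.card_pos])
    fun j => by simpa [vecMul, dotProduct] using sum_nonneg fun i _ => hS i j⟩

theorem fst_le_of_mem_collatzWielandtSet (hS : ∀ i j, 0 ≤ S i j) {p : ℝ × (ι → ℝ)}
    (hp : p ∈ collatzWielandtSet S) : p.1 ≤ ∑ i, ∑ j, S i j := by
  obtain ⟨-, ⟨hx, hx1⟩, hle⟩ := hp
  calc p.1 = ∑ j, p.1 * p.2 j := by rw [← mul_sum, hx1, mul_one]
    _ ≤ ∑ j, ∑ i, p.2 i * S i j := sum_le_sum fun j _ => hle j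
    _ ≤ ∑ j, ∑ i, S i j := sum_le_sum fun j _ => sum_le_sum fun i _ =>
      mul_le_of_le_one_left (hS i j) (mem_Icc_of_mem_stdSimplex ⟨hx, hx1⟩ i).2
    _ = ∑ i, ∑ j, S i j := sum_comm

theorem isCompact_collatzWielandtSet (hS : ∀ i j, 0 ≤ S i j) :
    IsCompact (collatzWielandtSet S) := by
  refine (isCompact_Icc.prod (isCompact_stdSimplex ℝ ι)).of_isClosed_subset ?_
    fun p hp => ⟨⟨hp.1, fst_le_of_mem_collatzWielandtSet hS hp⟩, hp.2.1⟩
  exact (isClosed_le continuous_const continuous_fst).inter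
    (((isClosed_stdSimplex ℝ ι).preimage continuous_snd).inter
      (isClosed_le (continuous_fst.smul continuous_snd)
        (continuous_snd.matrix_vecMul continuous_const)))

theorem norm_le_of_mulVec_eq_smul (hS : ∀ i j, 0 ≤ S i j) {y : ι → ℝ} {r : ℝ}
    (hy : ∀ i, 0 < y i) (hyS : y ᵥ* S = r • y) {ν : ℂ} {v : ι → ℂ} (hv : v ≠ 0)
    (hSv : S.map Complex.ofReal *ᵥ v = ν • v) : ‖ν‖ ≤ r := by
  set a : ι → ℝ := fun j => ‖v j‖
  have ha : 0 ≤ a := fun j => norm_nonneg _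
  have hya : 0 < y ⬝ᵥ a := by
    obtain ⟨j, hj⟩ := Function.ne_iff.1 hv
    exact sum_pos' (fun i _ => mul_nonneg (hy i).le (ha i))
      ⟨j, mem_univ j, mul_pos (hy j) (norm_pos_iff.2 hj)⟩
  have hle : ‖ν‖ • a ≤ S *ᵥ a := fun j => by
    have := congrFun hSv j
    simp only [mulVec, dotProduct, map_apply, Pi.smul_apply, smul_eq_mul] at this ⊢
    calc ‖ν‖ * ‖v j‖ = ‖∑ l, (S j l : ℂ) * v l‖ := by rw [this, norm_mul]
      _ ≤ ∑ l, S j l * a l := (norm_sum_le _ _).trans_eq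
        (sum_congr rfl fun l _ => by
          rw [norm_mul, Complex.norm_real, Real.norm_of_nonneg (hS j l)])
  refine le_of_mul_le_mul_right ?_ hya
  calc ‖ν‖ * (y ⬝ᵥ a) = y ⬝ᵥ (‖ν‖ • a) := by rw [dotProduct_smul, smul_eq_mul]
    _ ≤ y ⬝ᵥ (S *ᵥ a) := dotProduct_le_dotProduct_of_nonneg_left hle fun i => (hy i).le
    _ = r * (y ⬝ᵥ a) := by rw [dotProduct_mulVec, hyS, smul_dotProduct, smul_eq_mul]

section Irreducible

variable [DecidableEq ι]

theorem IsIrreducible.exists_pos_commute (hS : S.IsIrreducible) :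
    ∃ P : Matrix ι ι ℝ, (∀ i j, 0 < P i j) ∧ Commute S P := by
  choose m _ hm using (isIrreducible_iff_exists_pow_pos hS.nonneg).1 hS
  refine ⟨∑ p : ι × ι, S ^ m p.1 p.2, fun i j => ?_,
    Commute.sum_right _ _ _ fun p _ => Commute.self_pow S _⟩
  rw [sum_apply]
  exact sum_pos' (fun p _ => pow_apply_nonneg hS.nonneg _ _ _) ⟨(i, j), mem_univ _, hm i j⟩

theorem IsIrreducible.pos_of_vecMul_eq_smul (hS : S.IsIrreducible) {u : ι → ℝ} {r : ℝ}
    (hu : 0 ≤ u) (hu0 : u ≠ 0) (h : u ᵥ* S = r • u) (j : ι) : 0 < u j := by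
  obtain ⟨i, hi⟩ := Function.ne_iff.1 hu0
  obtain ⟨m, -, hm⟩ := (isIrreducible_iff_exists_pow_pos hS.nonneg).1 hS i j
  have hpos : 0 < r ^ m * u j := calc
    0 < u i * (S ^ m) i j := mul_pos ((hu i).lt_of_ne' hi) hm
    _ ≤ (u ᵥ* S ^ m) j :=
      single_le_sum (fun l _ => mul_nonneg (hu l) (pow_apply_nonneg hS.nonneg m l j))
        (mem_univ i)
    _ = r ^ m * u j := by rw [vecMul_pow_eq_pow_smul h]; rfl
  exact (hu j).lt_of_ne fun h0 => by simp [← h0] at hpos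

theorem IsIrreducible.exists_eq_smul_of_vecMul_eq_smul [Nonempty ι] (hS : S.IsIrreducible)
    {y z : ι → ℝ} {r : ℝ} (hy : ∀ i, 0 < y i) (hyS : y ᵥ* S = r • y) (hzS : z ᵥ* S = r • z) :
    ∃ t : ℝ, z = t • y := by
  obtain ⟨i₀, hi₀⟩ := Finite.exists_min fun i => z i / y i
  refine ⟨z i₀ / y i₀, by_contra fun hne => ?_⟩
  -- `z - t • y` is a nonnegative eigenvector vanishing at `i₀`
  have hu : 0 ≤ z - (z i₀ / y i₀) • y := fun i => by
    simpa [sub_nonneg] using (le_div_iff₀ (hy i)).1 (hi₀ i)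
  have := hS.pos_of_vecMul_eq_smul hu (sub_ne_zero.2 hne)
    (by rw [sub_vecMul, smul_vecMul, hyS, hzS, smul_sub, smul_comm]) i₀
  simp [div_mul_cancel₀ _ (hy i₀).ne'] at this

theorem IsIrreducible.exists_vecMul_eq_smul_of_commute [Nonempty ι] (hS : S.IsIrreducible)
    {T : Matrix ι ι ℝ} (hTS : Commute T S) {y : ι → ℝ} {r : ℝ} (hy : ∀ i, 0 < y i)
    (hyS : y ᵥ* S = r • y) : ∃ t : ℝ, y ᵥ* T = t • y :=
  hS.exists_eq_smul_of_vecMul_eq_smul hy hyS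
    (by rw [vecMul_vecMul, hTS.eq, ← vecMul_vecMul, hyS, smul_vecMul])

theorem IsIrreducible.exists_mem_collatzWielandtSet_gt [Nonempty ι] (hS : S.IsIrreducible)
    {r : ℝ} {y : ι → ℝ} (hr : 0 ≤ r) (hy : 0 ≤ y) (hy0 : y ≠ 0) (hle : r • y ≤ y ᵥ* S)
    (hne : y ᵥ* S ≠ r • y) : ∃ p ∈ collatzWielandtSet S, r < p.1 := by
  obtain ⟨P, hP, hSP⟩ := hS.exists_pos_commute
  set d := y ᵥ* S - r • y
  have hz := vecMul_apply_pos hP hy hy0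
  have hdP := vecMul_apply_pos hP (sub_nonneg.2 hle) (sub_ne_zero.2 hne)
  -- `y P` is positive and `(y P) S = r (y P) + d P` with `d P` positive, so `r` can be increased
  obtain ⟨ε, hε, hεle⟩ := exists_pos_smul_le hz hdP
  refine ⟨_, inv_sum_smul_mem_collatzWielandtSet (add_nonneg hr hε.le) (fun j => (hz j).le)
    (sum_pos (fun j _ => hz j) univ_nonempty) ?_, lt_add_of_pos_right r hε⟩
  calc (r + ε) • (y ᵥ* P) = r • (y ᵥ* P) + ε • (y ᵥ* P) := add_smul _ _ _
    _ ≤ r • (y ᵥ* P) + d ᵥ* P := add_le_add le_rfl hεle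
    _ = (y ᵥ* P) ᵥ* S := by
      rw [vecMul_vecMul, ← hSP.eq, ← vecMul_vecMul, ← sub_add_cancel (y ᵥ* S) (r • y), add_vecMul,
        smul_vecMul, add_comm]

theorem IsIrreducible.exists_pos_vecMul_eq_smul [Nonempty ι] (hS : S.IsIrreducible) :
    ∃ r : ℝ, ∃ y : ι → ℝ, (∀ i, 0 < y i) ∧ y ᵥ* S = r • y := by
  obtain ⟨⟨r, y⟩, ⟨hr, ⟨hy, hy1⟩, hle⟩, hmax⟩ :=
    (isCompact_collatzWielandtSet hS.nonneg).exists_isMaxOn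
      (collatzWielandtSet_nonempty hS.nonneg) continuous_fst.continuousOn
  have hy0 : y ≠ 0 := by rintro rfl; simp at hy1
  have heig : y ᵥ* S = r • y := by
    by_contra hne
    obtain ⟨p, hp, hrp⟩ := hS.exists_mem_collatzWielandtSet_gt hr hy hy0 hle hne
    exact (hmax hp).not_gt hrp
  exact ⟨r, y, hS.pos_of_vecMul_eq_smul hy hy0 heig, heig⟩

theorem exists_pos_vecMul_eq_smul_of_isIrreducible_pow [Nonempty ι] {T : Matrix ι ι ℝ} {k : ℕ}
    (hT : (T ^ k).IsIrreducible) (hcol : ∀ j, 0 < ∑ i, T i j) :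
    ∃ t : ℝ, 0 < t ∧ ∃ y : ι → ℝ, (∀ i, 0 < y i) ∧ y ᵥ* T = t • y := by
  obtain ⟨r, y, hy, hyS⟩ := hT.exists_pos_vecMul_eq_smul
  obtain ⟨r', w, hw, hwS⟩ := hT.transpose.exists_pos_vecMul_eq_smul
  obtain ⟨t, hyT⟩ := hT.exists_vecMul_eq_smul_of_commute (Commute.self_pow T k) hy hyS
  obtain ⟨t', hTw⟩ := hT.transpose.exists_vecMul_eq_smul_of_commute (T := Tᵀ)
    (transpose_pow T k ▸ Commute.self_pow Tᵀ k) hw hwS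
  rw [vecMul_transpose] at hTw
  have hyw : 0 < y ⬝ᵥ w := sum_pos (fun i _ => mul_pos (hy i) (hw i)) univ_nonempty
  have htt' : t = t' := mul_right_cancel₀ hyw.ne' <| by
    rw [← smul_eq_mul, ← smul_dotProduct, ← hyT, ← dotProduct_mulVec, hTw, dotProduct_smul,
      smul_eq_mul]
  subst htt'
  exact ⟨t, pos_of_mulVec_eq_smul hcol hw hTw, y, hy, hyT⟩

end Irreducible

theorem norm_le_of_isRoot_charpoly [DecidableEq ι] {T : Matrix ι ι ℝ} {k : ℕ} (hk : 0 < k)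
    (hT : ∀ i j, 0 ≤ (T ^ k) i j) {y : ι → ℝ} {t : ℝ} (ht : 0 ≤ t) (hy : ∀ i, 0 < y i)
    (hyT : y ᵥ* T = t • y) {μ : ℂ} (hμ : (T.map Complex.ofReal).charpoly.IsRoot μ) : ‖μ‖ ≤ t := by
  obtain ⟨v, hv, hTv⟩ := (isRoot_charpoly_iff_exists_mulVec_eq_smul _ _).1 hμ
  have hTkv : (T ^ k).map Complex.ofReal *ᵥ v = μ ^ k • v := by
    have hmap : (T ^ k).map Complex.ofReal = T.map Complex.ofReal ^ k :=
      Matrix.map_pow T Complex.ofRealHom k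
    rw [hmap]
    exact pow_mulVec_eq_pow_smul hTv k
  have := norm_le_of_mulVec_eq_smul hT hy (vecMul_pow_eq_pow_smul hyT k) hv hTkv
  rwa [norm_pow, pow_le_pow_iff_left₀ (norm_nonneg μ) ht hk.ne'] at this

end Nonneg

end Matrix

/-- Let `T` be an `n × n` real matrix (`n ≥ 1`) such that
(1) every column sum of `T` is positive, and
(2) there is a positive integer `k` with `T ^ k` entrywise nonnegative and irreducible.
Then there exists a nonzero nonnegative row vector `x` with `x T = ρ(T) x`,
where `ρ(T)` is the spectral radius of `T`. -/
theorem generalized_perron_frobenius_nonneg_left_eigenvector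
    (n : ℕ) (hn : 1 ≤ n) (T : Matrix (Fin n) (Fin n) ℝ)
    (hcol : ∀ j, 0 < ∑ i, T i j)
    (hpow : ∃ k : ℕ, 0 < k ∧ (∀ i j, 0 ≤ (T ^ k) i j) ∧
      (∀ i j, ∃ m : ℕ, 0 < m ∧ 0 < ((T ^ k) ^ m) i j))
    (ρ : ℝ)
    (hρ : IsGreatest {x : ℝ | ∃ μ : ℂ,
      (T.map Complex.ofReal).charpoly.IsRoot μ ∧ ‖μ‖ = x} ρ) :
    ∃ x : Fin n → ℝ, x ≠ 0 ∧ (∀ i, 0 ≤ x i) ∧ Matrix.vecMul x T = ρ • x := by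
  obtain ⟨k, hk, hnonneg, hirr⟩ := hpow
  have : Nonempty (Fin n) := ⟨⟨0, hn⟩⟩
  obtain ⟨t, ht, y, hy, hyT⟩ := Matrix.exists_pos_vecMul_eq_smul_of_isIrreducible_pow
    ((Matrix.isIrreducible_iff_exists_pow_pos hnonneg).2 hirr) hcol
  have hy0 : y ≠ 0 := fun h => (hy ⟨0, hn⟩).ne' (congrFun h _)
  have htρ : IsGreatest {x : ℝ | ∃ μ : ℂ,
      (T.map Complex.ofReal).charpoly.IsRoot μ ∧ ‖μ‖ = x} t := by
    refine ⟨⟨t, ?_, by simp [ht.le]⟩, ?_⟩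
    · have := (Matrix.isRoot_charpoly_of_vecMul_eq_smul hy0 hyT).map (f := Complex.ofRealHom)
      rwa [← Matrix.charpoly_map] at this
    · rintro _ ⟨μ, hμ, rfl⟩
      exact Matrix.norm_le_of_isRoot_charpoly hk hnonneg ht.le hy hyT hμ
  obtain rfl := hρ.unique htρ
  exact ⟨y, hy0, fun i => (hy i).le, hyT⟩
end

section
/- Let N ≥ 1 and let w₁,…,w_N be positive integers; set r = 1 + w₁ + ⋯ + w_N, W = (∏_{j=1}^N w_j^{w_j})^{1/r} (the positive real r-th root), and ξ = e^{2πi/r}. Define the holomorphic function f on (ℂ∖{0})^N by f(x₁,…,x_N) = x₁ + ⋯ + x_N + x₁^{−w₁}⋯x_N^{−w_N}. Then the set of critical points of f (points where all partial derivaties ∂f/∂x_i vanish) is exactly { p_k : k = 0,1,…,r−1 }, where p_k = (w₁ξ^k/W, …, w_Nξ^k/W). -/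
/-!
Differentiating in `xᵢ` shows that `x` is critical exactly when `xᵢ = wᵢ P` for every `i`,
where `P = ∏ xⱼ^{-wⱼ}`. Substituting back into the definition of `P` gives
`P = (∏ wⱼ^{wⱼ})⁻¹ P^{1-r}`, i.e. `(W P)^r = 1`, so `W P` is one of the `r`-th roots of unity `ξ^k`.
-/

open Finset Function

lemma Finset.prod_zpow_eq_zpow_sum₀ {ι G₀ : Type*} [CommGroupWithZero G₀] {a : G₀} (ha : a ≠ 0)
    (s : Finset ι) (f : ι → ℤ) : ∏ i ∈ s, a ^ f i = a ^ ∑ i ∈ s, f i := by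
  classical
  induction s using Finset.induction with
  | empty => simp
  | insert j s hj ih => rw [prod_insert hj, sum_insert hj, ih, zpow_add₀ ha]

lemma prod_mul_const_zpow {ι K : Type*} [Fintype ι] [Field K] (c : ι → K) {u : K} (hu : u ≠ 0)
    (a : ι → ℤ) : ∏ j, (c j * u) ^ a j = (∏ j, c j ^ a j) * u ^ ∑ j, a j := by
  simp only [mul_zpow, prod_mul_distrib, prod_zpow_eq_zpow_sum₀ hu]

section LandauGinzburg

variable {𝕜 ι : Type*} [NontriviallyNormedField 𝕜] [Fintype ι] [DecidableEq ι]

lemma hasDerivAt_sum_add_prod_zpow_update (a : ι → ℤ) (x : ι → 𝕜) (i : ι) (hx : x i ≠ 0) :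
    HasDerivAt (fun t => (∑ j, update x i t j) + ∏ j, update x i t j ^ a j)
      (1 + a i * (x i)⁻¹ * ∏ j, x j ^ a j) (x i) := by
  set S := ∑ j ∈ univ \ {i}, x j
  set Q := ∏ j ∈ univ \ {i}, x j ^ a j
  have hsum (t : 𝕜) : ∑ j, update x i t j = t + S := sum_update_of_mem (mem_univ i) x t
  have hprod (t : 𝕜) : ∏ j, update x i t j ^ a j = t ^ a i * Q := by
    rw [← prod_update_of_mem (mem_univ i)]
    exact prod_congr rfl fun j _ => apply_update (fun j y => y ^ a j) x i t j
  simp only [hsum, hprod]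
  refine (((hasDerivAt_id' (x i)).add_const S).add
    ((hasDerivAt_zpow (a i) (x i) (Or.inl hx)).mul_const Q)).congr_deriv ?_
  rw [prod_eq_mul_prod_sdiff_singleton_of_mem (mem_univ i), zpow_sub_one₀ hx]
  ring

lemma hasDerivAt_sum_add_prod_zpow_update_zero_iff (a : ι → ℤ) (x : ι → 𝕜) (i : ι)
    (hx : x i ≠ 0) :
    HasDerivAt (fun t => (∑ j, update x i t j) + ∏ j, update x i t j ^ a j) 0 (x i) ↔
      x i = -a i * ∏ j, x j ^ a j := by
  have hderiv := hasDerivAt_sum_add_prod_zpow_update a x i hx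
  constructor
  · intro h
    have h0 := hderiv.unique h
    field_simp at h0
    linear_combination h0
  · intro h
    refine hderiv.congr_deriv ?_
    rw [mul_right_comm, show (a i : 𝕜) * ∏ j, x j ^ a j = -x i by rw [h]; ring, neg_mul,
      mul_inv_cancel₀ hx, add_neg_cancel]

end LandauGinzburg

lemma fixedPoints_mul_prod_zpow_iff {ι K : Type*} [Fintype ι] [Field K] {a : ι → ℤ}
    (ha : 1 - ∑ j, a j ≠ 0) {c : ι → K} (hc : ∀ j, c j ≠ 0) (x : ι → K) :
    ((∀ i, x i ≠ 0) ∧ ∀ i, x i = c i * ∏ j, x j ^ a j) ↔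
      ∃ u, u ^ (1 - ∑ j, a j) = ∏ j, c j ^ a j ∧ x = fun i => c i * u := by
  constructor
  · rintro ⟨hx, hfix⟩
    set P := ∏ j, x j ^ a j
    have hP : P ≠ 0 := prod_ne_zero_iff.2 fun j _ => zpow_ne_zero _ (hx j)
    have hself : P = (∏ j, c j ^ a j) * P ^ ∑ j, a j := by
      rw [← prod_mul_const_zpow c hP]
      exact prod_congr rfl fun j _ => by rw [← hfix j]
    refine ⟨P, ?_, funext hfix⟩
    rw [zpow_sub₀ hP, zpow_one, div_eq_iff (zpow_ne_zero _ hP)]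
    exact hself
  · rintro ⟨u, hu, rfl⟩
    have hu0 : u ≠ 0 := by
      rintro rfl
      rw [zero_zpow _ ha] at hu
      exact prod_ne_zero_iff.2 (fun j _ => zpow_ne_zero _ (hc j)) hu.symm
    refine ⟨fun i => mul_ne_zero (hc i) hu0, fun i => ?_⟩
    rw [prod_mul_const_zpow c hu0, ← hu, ← zpow_add₀ hu0, sub_add_cancel, zpow_one]

lemma pow_eq_inv_pow_iff_exists_eq_div {K : Type*} [Field K] {ξ W u : K} {r : ℕ} [NeZero r]
    (hξ : IsPrimitiveRoot ξ r) (hW : W ≠ 0) :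
    u ^ r = (W ^ r)⁻¹ ↔ ∃ k < r, u = ξ ^ k / W := by
  rw [← mul_eq_one_iff_eq_inv₀ (pow_ne_zero r hW), ← mul_pow]
  constructor
  · intro h
    obtain ⟨k, hk, hξk⟩ := hξ.eq_pow_of_pow_eq_one h
    exact ⟨k, hk, eq_div_of_mul_eq hW hξk.symm⟩
  · rintro ⟨k, -, rfl⟩
    rw [div_mul_cancel₀ _ hW, ← pow_mul, mul_comm, pow_mul, hξ.pow_eq_one, one_pow]

theorem critical_points_of_LG_potential_of_weighted_projective_space_general
    (N : ℕ) (w : Fin N → ℕ) (hw : ∀ i, 0 < w i)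
    (r : ℕ) (hr : r = 1 + ∑ i, w i)
    (W : ℝ) (hW : W = Real.rpow (∏ j, (w j : ℝ) ^ (w j)) ((r : ℝ)⁻¹))
    (ξ : ℂ) (hξ : ξ = Complex.exp (2 * (Real.pi : ℂ) * Complex.I / (r : ℂ)))
    (f : (Fin N → ℂ) → ℂ)
    (hf : f = fun x => (∑ i, x i) + ∏ j, (x j) ^ (-(w j : ℤ))) :
    {x : Fin N → ℂ | (∀ i, x i ≠ 0) ∧
        ∀ i, HasDerivAt (fun t => f (Function.update x i t)) 0 (x i)} =
      {x : Fin N → ℂ | ∃ k : ℕ, k < r ∧ x = fun i => (w i : ℂ) * ξ ^ k / (W : ℂ)} := by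
  have : NeZero r := ⟨by omega⟩
  have hξr : IsPrimitiveRoot ξ r := hξ ▸ Complex.isPrimitiveRoot_exp r (NeZero.ne r)
  have hWr : (W : ℂ) ^ r = ∏ j, (w j : ℂ) ^ w j := by
    rw [hW]
    exact_mod_cast Real.rpow_inv_natCast_pow (by positivity) (NeZero.ne r)
  have hw0 (j : Fin N) : (w j : ℂ) ≠ 0 := Nat.cast_ne_zero.2 (hw j).ne'
  have hW0 : (W : ℂ) ≠ 0 := (pow_ne_zero_iff (NeZero.ne r)).1
    (hWr ▸ prod_ne_zero_iff.2 fun j _ => pow_ne_zero _ (hw0 j))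
  have hexp : 1 - ∑ j, -(w j : ℤ) = r := by
    rw [hr, sum_neg_distrib]
    push_cast
    ring
  have hprod : ∏ j, (w j : ℂ) ^ (-(w j : ℤ)) = ((W : ℂ) ^ r)⁻¹ := by
    simp only [hWr, zpow_neg, zpow_natCast, prod_inv_distrib]
  ext x
  simp only [Set.mem_ofPred_eq, hf]
  rw [and_congr_right fun hx => forall_congr' fun i =>
    hasDerivAt_sum_add_prod_zpow_update_zero_iff (fun j => -(w j : ℤ)) x i (hx i)]
  simp only [Int.cast_neg, Int.cast_natCast, neg_neg]
  rw [fixedPoints_mul_prod_zpow_iff (by rw [hexp]; exact_mod_cast NeZero.ne r) hw0, hexp]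
  simp only [zpow_natCast, hprod, pow_eq_inv_pow_iff_exists_eq_div hξr hW0]
  constructor
  · rintro ⟨_, ⟨k, hk, rfl⟩, rfl⟩
    exact ⟨k, hk, by simp only [mul_div_assoc]⟩
  · rintro ⟨k, hk, rfl⟩
    exact ⟨_, ⟨k, hk, rfl⟩, by simp only [mul_div_assoc]⟩

/-- Critical points of the Landau–Ginzburg potential
`f(x₁,…,x_N) = x₁ + ⋯ + x_N + x₁^{−w₁} ⋯ x_N^{−w_N}` mirror to the weighted projective
space `ℙ(1, w₁, …, w_N)`: writing `r = 1 + w₁ + ⋯ + w_N`, `W = (∏ wⱼ^{wⱼ})^{1/r}` (the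
positive real `r`-th root) and `ξ = e^{2πi/r}`, the set of points of `(ℂ∖{0})^N` where
all partial derivatives of `f` vanish is exactly `{p_k : 0 ≤ k < r}` with
`p_k = (w₁ ξ^k / W, …, w_N ξ^k / W)`. -/
theorem critical_points_of_LG_potential_of_weighted_projective_space
    (N : ℕ) (hN : 1 ≤ N) (w : Fin N → ℕ) (hw : ∀ i, 0 < w i)
    (r : ℕ) (hr : r = 1 + ∑ i, w i)
    (W : ℝ) (hW : W = Real.rpow (∏ j, (w j : ℝ) ^ (w j)) ((r : ℝ)⁻¹))
    (ξ : ℂ) (hξ : ξ = Complex.exp (2 * (Real.pi : ℂ) * Complex.I / (r : ℂ)))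
    (f : (Fin N → ℂ) → ℂ)
    (hf : f = fun x => (∑ i, x i) + ∏ j, (x j) ^ (-(w j : ℤ))) :
    {x : Fin N → ℂ | (∀ i, x i ≠ 0) ∧
        ∀ i, HasDerivAt (fun t => f (Function.update x i t)) 0 (x i)} =
      {x : Fin N → ℂ | ∃ k : ℕ, k < r ∧ x = fun i => (w i : ℂ) * ξ ^ k / (W : ℂ)} :=
  critical_points_of_LG_potential_of_weighted_projective_space_general N w hw r hr W hW ξ hξ f hf
end

section
/- Let N ≥ 1 and let w₁,…,w_N be positive integers; set r = 1 + w₁ + ⋯ + w_N, W = (∏_{j=1}^N w_j^{w_j})^{1/r} (the positive real r-th root), c = r/W, and ξ = e^{2πi/r}. Define f on (ℂ∖{0})^N by f(x₁,…,x_N) = x₁ + ⋯ + x_N + x₁^{−w₁}⋯x_N^{−w_N}, and let p_k = (w₁ξ^k/W, …, w_Nξ^k/W) for 0 ≤ k ≤ r−1. Then f(p_k) = c·ξ^k for every k; in particular every critical value u of f satisfies |u| ≤ c, and p₀ is the unique critical point of f contained in f^{−1}(c). -/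
/-!
Write `P = ∏ xⱼ^{-wⱼ}`. The `i`-th partial derivative of `f` is `1 - wᵢ P / xᵢ`, so a critical
point has the form `x = (wᵢ P)ᵢ`; substituting this back into `P` gives the single equation
`P^r = ∏ wⱼ^{-wⱼ} = W^{-r}`, and then `f(x) = (∑ wᵢ) P + P = r P`. Hence the critical values
are `r ξᵏ / W = c ξᵏ`, all of modulus `c`, and `f(x) = c` forces `P = 1/W`, i.e. `x = p₀`.
-/

open Finset

section LandauGinzburg

variable {ι : Type*} [Fintype ι] (w : ι → ℕ)

def lgMonomial {K : Type*} [Field K] (x : ι → K) : K := ∏ j, x j ^ (-(w j : ℤ))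

def lgPotential {K : Type*} [Field K] (x : ι → K) : K := ∑ i, x i + lgMonomial w x

section Field

variable {K : Type*} [Field K]

theorem lgMonomial_weight_mul (Q : K) :
    lgMonomial w (fun i => (w i : K) * Q) = (∏ j, (w j : K) ^ w j)⁻¹ * (Q ^ ∑ j, w j)⁻¹ := by
  simp only [lgMonomial, zpow_neg, zpow_natCast, mul_pow, mul_inv, prod_mul_distrib,
    prod_inv_distrib, prod_pow_eq_pow_sum]

theorem lgPotential_weight_mul {Q : K}
    (hQ : Q ^ (1 + ∑ j, w j) = (∏ j, (w j : K) ^ w j)⁻¹) :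
    lgPotential w (fun i => (w i : K) * Q) = ((1 + ∑ j, w j : ℕ) : K) * Q := by
  rw [lgPotential, lgMonomial_weight_mul, ← hQ, ← sum_mul]
  rcases eq_or_ne Q 0 with rfl | hQ0
  · simp
  · rw [pow_add, pow_one, mul_inv_cancel_right₀ (pow_ne_zero _ hQ0)]
    push_cast
    ring

theorem lgMonomial_ne_zero {x : ι → K} (hx : ∀ i, x i ≠ 0) : lgMonomial w x ≠ 0 :=
  prod_ne_zero_iff.mpr fun j _ => zpow_ne_zero _ (hx j)

variable [DecidableEq ι]

theorem lgMonomial_update (x : ι → K) (i : ι) (t : K) :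
    lgMonomial w (Function.update x i t) =
      t ^ (-(w i : ℤ)) * ∏ j ∈ univ.erase i, x j ^ (-(w j : ℤ)) := by
  rw [lgMonomial, ← mul_prod_erase _ _ (mem_univ i), Function.update_self]
  exact congrArg _ (prod_congr rfl fun j hj => by rw [Function.update_of_ne (ne_of_mem_erase hj)])

end Field

variable {𝕜 : Type*} [NontriviallyNormedField 𝕜] [DecidableEq ι]

theorem hasDerivAt_lgPotential_update {x : ι → 𝕜} {i : ι} (hx : x i ≠ 0) :
    HasDerivAt (fun t => lgPotential w (Function.update x i t))
      (1 - w i * lgMonomial w x / x i) (x i) := by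
  simp only [lgPotential, lgMonomial_update, sum_update_of_mem (mem_univ i)]
  refine (((hasDerivAt_id (x i)).add_const _).add
    ((hasDerivAt_zpow (-(w i : ℤ)) (x i) (Or.inl hx)).mul_const _)).congr_deriv ?_
  have hsplit := lgMonomial_update w x i (x i)
  rw [Function.update_eq_self] at hsplit
  rw [hsplit, zpow_sub_one₀ hx]
  push_cast
  ring

def IsLGCriticalPoint (x : ι → 𝕜) : Prop :=
  (∀ i, x i ≠ 0) ∧ ∀ i, HasDerivAt (fun t => lgPotential w (Function.update x i t)) 0 (x i)

namespace IsLGCriticalPoint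

variable {w} {x : ι → 𝕜}

theorem eq_weight_mul_lgMonomial (hx : IsLGCriticalPoint w x) :
    x = fun i => (w i : 𝕜) * lgMonomial w x := by
  funext i
  have hderiv := (hx.2 i).unique (hasDerivAt_lgPotential_update w (hx.1 i))
  field_simp [hx.1 i] at hderiv
  linear_combination -hderiv

theorem lgMonomial_pow (hx : IsLGCriticalPoint w x) :
    lgMonomial w x ^ (1 + ∑ j, w j) = (∏ j, (w j : 𝕜) ^ w j)⁻¹ := by
  have hP := lgMonomial_ne_zero w hx.1
  have hself := lgMonomial_weight_mul w (lgMonomial w x)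
  rw [← hx.eq_weight_mul_lgMonomial] at hself
  rw [add_comm, pow_succ, mul_comm]
  nth_rewrite 1 [hself]
  rw [mul_assoc, inv_mul_cancel₀ (pow_ne_zero _ hP), mul_one]

theorem lgPotential_eq (hx : IsLGCriticalPoint w x) :
    lgPotential w x = ((1 + ∑ j, w j : ℕ) : 𝕜) * lgMonomial w x := by
  nth_rewrite 1 [hx.eq_weight_mul_lgMonomial]
  exact lgPotential_weight_mul w hx.lgMonomial_pow

end IsLGCriticalPoint

end LandauGinzburg

theorem norm_eq_of_pow_eq_pow {𝕜 : Type*} [NormedDivisionRing 𝕜] {a b : 𝕜} {n : ℕ} (hn : n ≠ 0)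
    (h : a ^ n = b ^ n) : ‖a‖ = ‖b‖ :=
  (pow_left_inj₀ (norm_nonneg _) (norm_nonneg _) hn).mp (by rw [← norm_pow, h, norm_pow])

theorem critical_values_of_LG_potential_of_weighted_projective_space_general
    (N : ℕ) (w : Fin N → ℕ)
    (r : ℕ) (hr : r = 1 + ∑ i, w i)
    (W : ℝ) (hW : W = Real.rpow (∏ j, (w j : ℝ) ^ (w j)) ((r : ℝ)⁻¹))
    (c : ℝ) (hc : c = r / W)
    (ξ : ℂ) (hξ : ξ = Complex.exp (2 * (Real.pi : ℂ) * Complex.I / (r : ℂ)))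
    (f : (Fin N → ℂ) → ℂ)
    (hf : f = fun x => (∑ i, x i) + ∏ j, (x j) ^ (-(w j : ℤ)))
    (p : ℕ → Fin N → ℂ)
    (hp : p = fun k i => (w i : ℂ) * ξ ^ k / (W : ℂ)) :
    (∀ k, k < r → f (p k) = (c : ℂ) * ξ ^ k) ∧
    (∀ x : Fin N → ℂ, (∀ i, x i ≠ 0) →
      (∀ i, HasDerivAt (fun t => f (Function.update x i t)) 0 (x i)) →
      ‖f x‖ ≤ c) ∧
    (∀ x : Fin N → ℂ, (∀ i, x i ≠ 0) →
      (∀ i, HasDerivAt (fun t => f (Function.update x i t)) 0 (x i)) →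
      f x = (c : ℂ) → x = p 0) := by
  obtain rfl : f = lgPotential w := hf
  have hr0 : r ≠ 0 := by omega
  have hWr : W ^ r = ∏ j, (w j : ℝ) ^ w j := by
    rw [hW]
    exact Real.rpow_inv_natCast_pow (by positivity) hr0
  have hWpos : 0 < W := by
    rw [hW]
    exact Real.rpow_pos_of_pos (prod_pos fun j _ => by exact_mod_cast Nat.pow_self_pos) _
  have hWrC : ((W : ℂ)⁻¹) ^ r = (∏ j, (w j : ℂ) ^ w j)⁻¹ := by
    rw [inv_pow, ← Complex.ofReal_pow, hWr]
    push_cast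
    rfl
  have hξr : ξ ^ r = 1 := hξ ▸ (Complex.isPrimitiveRoot_exp r hr0).pow_eq_one
  refine ⟨fun k _ => ?_, fun x hx hcrit => ?_, fun x hx hcrit hfx => ?_⟩
  · have hpk : p k = fun i => (w i : ℂ) * (ξ ^ k * (W : ℂ)⁻¹) := by
      rw [hp]; funext i; ring
    have hQ : (ξ ^ k * (W : ℂ)⁻¹) ^ r = (∏ j, (w j : ℂ) ^ w j)⁻¹ := by
      rw [mul_pow, ← pow_mul, mul_comm k, pow_mul, hξr, one_pow, one_mul, hWrC]
    rw [hpk, lgPotential_weight_mul w (hr ▸ hQ), ← hr, hc]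
    push_cast
    ring
  · have hcp : IsLGCriticalPoint w x := ⟨hx, hcrit⟩
    have hnorm : ‖lgMonomial w x‖ = ‖(W : ℂ)⁻¹‖ :=
      norm_eq_of_pow_eq_pow hr0 (by rw [hWrC, hr]; exact hcp.lgMonomial_pow)
    rw [hcp.lgPotential_eq, ← hr, norm_mul, hnorm, hc, norm_inv, Complex.norm_real,
      Real.norm_of_nonneg hWpos.le, Complex.norm_natCast, div_eq_mul_inv]
  · have hcp : IsLGCriticalPoint w x := ⟨hx, hcrit⟩
    rw [hcp.lgPotential_eq, ← hr, hc] at hfx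
    have hP : lgMonomial w x = (W : ℂ)⁻¹ := by
      push_cast at hfx
      rw [div_eq_mul_inv] at hfx
      exact mul_left_cancel₀ (by exact_mod_cast hr0) hfx
    rw [hcp.eq_weight_mul_lgMonomial, hP, hp]
    funext i
    simp [div_eq_mul_inv]

/-- Critical values of the Landau–Ginzburg potential
`f(x₁,…,x_N) = x₁ + ⋯ + x_N + x₁^{−w₁} ⋯ x_N^{−w_N}` mirror to `ℙ(1, w₁, …, w_N)`:
with `r = 1 + w₁ + ⋯ + w_N`, `W = (∏ wⱼ^{wⱼ})^{1/r}`, `c = r / W`, `ξ = e^{2πi/r}` and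
`p_k = (w₁ ξ^k / W, …, w_N ξ^k / W)`, one has `f(p_k) = c ξ^k` for every `k`; in
particular every critical value `u` of `f` satisfies `|u| ≤ c`, and `p₀` is the unique
critical point of `f` contained in `f⁻¹(c)`. -/
theorem critical_values_of_LG_potential_of_weighted_projective_space
    (N : ℕ) (hN : 1 ≤ N) (w : Fin N → ℕ) (hw : ∀ i, 0 < w i)
    (r : ℕ) (hr : r = 1 + ∑ i, w i)
    (W : ℝ) (hW : W = Real.rpow (∏ j, (w j : ℝ) ^ (w j)) ((r : ℝ)⁻¹))
    (c : ℝ) (hc : c = r / W)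
    (ξ : ℂ) (hξ : ξ = Complex.exp (2 * (Real.pi : ℂ) * Complex.I / (r : ℂ)))
    (f : (Fin N → ℂ) → ℂ)
    (hf : f = fun x => (∑ i, x i) + ∏ j, (x j) ^ (-(w j : ℤ)))
    (p : ℕ → Fin N → ℂ)
    (hp : p = fun k i => (w i : ℂ) * ξ ^ k / (W : ℂ)) :
    (∀ k, k < r → f (p k) = (c : ℂ) * ξ ^ k) ∧
    (∀ x : Fin N → ℂ, (∀ i, x i ≠ 0) →
      (∀ i, HasDerivAt (fun t => f (Function.update x i t)) 0 (x i)) →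
      ‖f x‖ ≤ c) ∧
    (∀ x : Fin N → ℂ, (∀ i, x i ≠ 0) →
      (∀ i, HasDerivAt (fun t => f (Function.update x i t)) 0 (x i)) →
      f x = (c : ℂ) → x = p 0) :=
  critical_values_of_LG_potential_of_weighted_projective_space_general N w r hr W hW c hc ξ hξ f hf
    p hp
end

section
/- Fix an integer r with 4 ≤ r ≤ 8 and let L = ℤH ⊕ ℤE₁ ⊕ ⋯ ⊕ ℤE_r carry the bilinear form H·H = 1, E_i·E_i = −1, H·E_i = E_i·E_j = 0 (i ≠ j), with c₁ = 3H − ∑_{i=1}^r E_i. Let 𝔈_r = { A ∈ L : A·A = −1 and A·c₁ = 1 } (a finite set). Then for every i ∈ {1,…,r}, the rational number ∑_{A ∈ 𝔈_r} (A·E_i)·((A·H)/3 − A·E_i) equals d_r, where d₄ = −3, d₅ = −4, d₆ = −6, d₇ = −12, d₈ = −60. -/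
open Finset

lemma adj_nonneg (x : ℤ) : 0 ≤ x * (x + 1) := by
  rcases le_or_gt 0 x with h | h
  · exact mul_nonneg h (by omega)
  · have h1 : x + 1 ≤ 0 := by omega
    nlinarith

lemma sum_two {n : ℕ} (f : Fin n → ℤ) (c : ℤ) (g : ℤ → ℤ)
    (h : ∀ k, f k = c ∨ f k = c + 1) :
    ∑ k, g (f k) = ((univ.filter fun k => f k = c).card : ℤ) * g c
      + ((univ.filter fun k => ¬ f k = c).card : ℤ) * g (c + 1) := by
  have e1 : ∑ k ∈ univ.filter (fun k => f k = c), g (f k)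
      = (univ.filter fun k => f k = c).card • g c := by
    rw [Finset.sum_congr rfl (fun k hk => by rw [(mem_filter.1 hk).2])]
    exact Finset.sum_const _
  have e2 : ∑ k ∈ univ.filter (fun k => ¬ f k = c), g (f k)
      = (univ.filter fun k => ¬ f k = c).card • g (c + 1) := by
    rw [Finset.sum_congr rfl (fun k hk => by
      rcases h k with h' | h'
      · exact absurd h' (mem_filter.1 hk).2
      · rw [h'])]
    exact Finset.sum_const _
  rw [← Finset.sum_filter_add_sum_filter_not univ (fun k => f k = c), e1, e2]
  push_cast [nsmul_eq_mul]
  ring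

lemma card_two {n : ℕ} (f : Fin n → ℤ) (c : ℤ) :
    (univ.filter fun k => f k = c).card + (univ.filter fun k => ¬ f k = c).card = n := by
  rw [Finset.card_filter_add_card_filter_not, card_univ, Fintype.card_fin]

lemma count_two {n : ℕ} (v c : ℤ) (m : ℕ) (S : Finset (ℤ × (Fin n → ℤ)))
    (hS : ∀ A, A ∈ S ↔ (A.1 = v ∧ (∀ k, A.2 k = c ∨ A.2 k = c + 1) ∧
      (univ.filter fun k => A.2 k = c).card = m)) :
    S.card = n.choose m := by
  have hpc : (Finset.powersetCard m (univ : Finset (Fin n))).card = n.choose m := by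
    simp [Finset.card_powersetCard]
  rw [← hpc]
  apply Finset.card_bij (fun A _ => univ.filter fun k => A.2 k = c)
  · intro A hA
    rw [Finset.mem_powersetCard]
    exact ⟨Finset.subset_univ _, ((hS A).1 hA).2.2⟩
  · intro A hA B hB heq
    obtain ⟨hA1, hA2, -⟩ := (hS A).1 hA
    obtain ⟨hB1, hB2, -⟩ := (hS B).1 hB
    have h2 : A.2 = B.2 := by
      funext k
      have hmm : k ∈ univ.filter (fun k => A.2 k = c) ↔ k ∈ univ.filter (fun k => B.2 k = c) := by
        rw [heq]
      simp only [mem_filter, mem_univ, true_and] at hmm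
      rcases hA2 k with h | h <;> rcases hB2 k with h' | h' <;> omega
    exact Prod.ext (hA1.trans hB1.symm) h2
  · intro s hs
    rw [Finset.mem_powersetCard] at hs
    have hfil : (univ.filter fun k => (if k ∈ s then c else c + 1) = c) = s := by
      ext k; simp only [mem_filter, mem_univ, true_and]
      by_cases h : k ∈ s <;> simp [h]
    refine ⟨(v, fun k => if k ∈ s then c else c + 1), ?_, hfil⟩
    rw [hS]
    exact ⟨rfl, fun k => by dsimp only; split <;> simp, by rw [show (univ.filter fun k =>
      ((v, fun k => if k ∈ s then c else c + 1) : ℤ × (Fin n → ℤ)).2 k = c) = s from hfil, hs.2]⟩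

section
variable {n : ℕ} (𝔈 : Finset (ℤ × (Fin n → ℤ)))
  (hmem : ∀ A, A ∈ 𝔈 ↔ (∑ k, A.2 k * A.2 k = A.1 * A.1 + 1 ∧ 3 * A.1 + ∑ k, A.2 k = 1))

-- expansion of the shifted sum
lemma shift_sum (A : ℤ × (Fin n → ℤ)) (c : ℤ) :
    ∑ k, (A.2 k - c) * (A.2 k - c - 1)
      = ∑ k, A.2 k * A.2 k - (2*c+1) * ∑ k, A.2 k + n * (c * (c+1)) := by
  rw [Finset.mul_sum]
  rw [Finset.sum_congr rfl (g := fun k => (A.2 k * A.2 k - (2*c+1) * A.2 k) + c * (c+1))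
    (fun k _ => by ring)]
  rw [Finset.sum_add_distrib, Finset.sum_sub_distrib, Finset.sum_const, card_univ,
    Fintype.card_fin, nsmul_eq_mul]

include hmem in
lemma fiber_card (v c : ℤ) (m : ℕ)
    (h0 : v * v + 1 - (2*c+1) * (1 - 3*v) + c * (c+1) * n = 0)
    (hm : c * m + (c+1) * ((n : ℤ) - m) = 1 - 3*v) :
    (𝔈.filter fun A => A.1 = v).card = n.choose m := by
  apply count_two v c m
  intro A
  rw [mem_filter, hmem]
  constructor
  · rintro ⟨⟨hsq, hlin⟩, hv⟩
    subst hv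
    have hzero : ∑ k, (A.2 k - c) * (A.2 k - c - 1) = 0 := by
      rw [shift_sum]; linear_combination hsq - (2*c+1) * hlin + h0
    have htwo : ∀ k, A.2 k = c ∨ A.2 k = c + 1 := by
      intro k
      have h1 := (Finset.sum_eq_zero_iff_of_nonneg
        (fun k _ => by have := adj_nonneg (A.2 k - c - 1); nlinarith)).1 hzero k (mem_univ k)
      rcases mul_eq_zero.1 h1 with h | h <;> omega
    refine ⟨rfl, htwo, ?_⟩
    have hs := sum_two A.2 c id htwo
    have hc := card_two A.2 c
    simp only [id] at hs
    -- linear: c * t + (c+1) * tc = 1 - 3 v, and hm; conclude t = m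
    set t := (univ.filter fun k => A.2 k = c).card with ht
    set tc := (univ.filter fun k => ¬ A.2 k = c).card with htc
    have heq : c * t + (c+1) * ((n : ℤ) - t) = c * m + (c+1) * ((n : ℤ) - m) := by
      rw [hm]
      have htcn : (tc : ℤ) = (n : ℤ) - t := by omega
      linear_combination hlin - hs - (c+1) * htcn
    have : (t : ℤ) = m := by linear_combination -heq
    omega
  · rintro ⟨hv, htwo, hcard⟩
    have hs := sum_two A.2 c id htwo
    have hsq := sum_two A.2 c (fun x => x * x) htwo
    have hc := card_two A.2 c
    simp only [id] at hs hsq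
    have htc : ((univ.filter fun k => ¬ A.2 k = c).card : ℤ) = (n : ℤ) - m := by omega
    rw [hcard] at hs hsq
    rw [htc] at hs hsq
    refine ⟨⟨?_, ?_⟩, hv⟩
    · rw [hsq, hv]; linear_combination (2*c+1) * hm - h0
    · rw [hs, hv]; linear_combination hm

include hmem in
lemma fiber_empty (v c : ℤ)
    (hneg : v * v + 1 - (2*c+1) * (1 - 3*v) + c * (c+1) * n < 0) :
    (𝔈.filter fun A => A.1 = v) = ∅ := by
  rw [Finset.eq_empty_iff_forall_notMem]
  rintro A hA
  rw [mem_filter, hmem] at hA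
  obtain ⟨⟨hsq, hlin⟩, hv⟩ := hA
  subst hv
  have h1 : 0 ≤ ∑ k, (A.2 k - c) * (A.2 k - c - 1) :=
    Finset.sum_nonneg fun k _ => by have := adj_nonneg (A.2 k - c - 1); nlinarith
  rw [shift_sum] at h1
  have h2 : ∑ k, A.2 k * A.2 k - (2*c+1) * ∑ k, A.2 k + (n:ℤ) * (c * (c+1))
      = A.1 * A.1 + 1 - (2*c+1) * (1 - 3*A.1) + c * (c+1) * n := by
    linear_combination hsq - (2*c+1) * hlin
  linarith

end

lemma filter_split3 {n : ℕ} (f : Fin n → ℤ) (c : ℤ)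
    (h : ∀ k, f k = c ∨ f k = c+1 ∨ f k = c+2) :
    ((univ.filter fun k => ¬ f k = c).filter fun k => f k = c+1)
        = (univ.filter fun k => f k = c+1) ∧
    ((univ.filter fun k => ¬ f k = c).filter fun k => ¬ f k = c+1)
        = (univ.filter fun k => f k = c+2) := by
  constructor <;> (ext k; simp only [mem_filter, mem_univ, true_and]; have := h k; omega)

lemma sum_three {n : ℕ} (f : Fin n → ℤ) (c : ℤ) (g : ℤ → ℤ)
    (h : ∀ k, f k = c ∨ f k = c+1 ∨ f k = c+2) :
    ∑ k, g (f k) = ((univ.filter fun k => f k = c).card : ℤ) * g c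
      + ((univ.filter fun k => f k = c+1).card : ℤ) * g (c+1)
      + ((univ.filter fun k => f k = c+2).card : ℤ) * g (c+2) := by
  obtain ⟨e1, e2⟩ := filter_split3 f c h
  have s1 : ∑ x ∈ univ.filter (fun k => f k = c), g (f x)
      = (univ.filter fun k => f k = c).card • g c := by
    rw [Finset.sum_congr rfl (fun k hk => by rw [(mem_filter.1 hk).2] : ∀ k ∈ univ.filter
      (fun k => f k = c), g (f k) = g c)]
    exact Finset.sum_const _
  have s2 : ∑ x ∈ univ.filter (fun k => f k = c+1), g (f x)
      = (univ.filter fun k => f k = c+1).card • g (c+1) := by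
    rw [Finset.sum_congr rfl (fun k hk => by rw [(mem_filter.1 hk).2] : ∀ k ∈ univ.filter
      (fun k => f k = c+1), g (f k) = g (c+1))]
    exact Finset.sum_const _
  have s3 : ∑ x ∈ univ.filter (fun k => f k = c+2), g (f x)
      = (univ.filter fun k => f k = c+2).card • g (c+2) := by
    rw [Finset.sum_congr rfl (fun k hk => by rw [(mem_filter.1 hk).2] : ∀ k ∈ univ.filter
      (fun k => f k = c+2), g (f k) = g (c+2))]
    exact Finset.sum_const _
  rw [← Finset.sum_filter_add_sum_filter_not univ (fun k => f k = c),
    ← Finset.sum_filter_add_sum_filter_not (univ.filter fun k => ¬ f k = c) (fun k => f k = c+1),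
    e1, e2, s1, s2, s3]
  push_cast [nsmul_eq_mul]
  ring

lemma card_three {n : ℕ} (f : Fin n → ℤ) (c : ℤ)
    (h : ∀ k, f k = c ∨ f k = c+1 ∨ f k = c+2) :
    (univ.filter fun k => f k = c).card + (univ.filter fun k => f k = c+1).card
      + (univ.filter fun k => f k = c+2).card = n := by
  obtain ⟨e1, e2⟩ := filter_split3 f c h
  have h1 := Finset.card_filter_add_card_filter_not (s := (univ : Finset (Fin n)))
    (fun k => f k = c)
  have h2 := Finset.card_filter_add_card_filter_not
    (s := univ.filter fun k => ¬ f k = c) (fun k => f k = c+1)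
  rw [e1, e2] at h2
  rw [card_univ, Fintype.card_fin] at h1
  omega

lemma filt_singleton {α : Type*} [LinearOrder α] (s : Finset α) (h : s.card = 1)
    (hne : s.Nonempty) (k : α) : k ∈ s ↔ k = s.min' hne := by
  obtain ⟨a, ha⟩ := Finset.card_eq_one.1 h
  subst ha
  simp only [Finset.mem_singleton]
  constructor <;> (intro h'; rw [h'])
  · exact (Finset.min'_singleton a).symm
  · exact Finset.min'_singleton a

lemma count_three (S : Finset (ℤ × (Fin 8 → ℤ)))
    (hS : ∀ A, A ∈ S ↔ (A.1 = 3 ∧ (∀ k, A.2 k = -2 ∨ A.2 k = -1 ∨ A.2 k = 0) ∧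
      (univ.filter fun k => A.2 k = -2).card = 1 ∧
      (univ.filter fun k => A.2 k = 0).card = 1)) :
    S.card = 56 := by
  have hoff : ((univ : Finset (Fin 8)).offDiag).card = 56 := by
    rw [Finset.offDiag_card]; simp
  rw [← hoff]
  have hne : ∀ (A : ℤ × (Fin 8 → ℤ)), A ∈ S →
      ((univ.filter fun k => A.2 k = -2).Nonempty ∧ (univ.filter fun k => A.2 k = 0).Nonempty) := by
    intro A hA
    obtain ⟨-, -, h2, h0⟩ := (hS A).1 hA
    exact ⟨Finset.card_pos.1 (by omega), Finset.card_pos.1 (by omega)⟩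
  apply Finset.card_bij (fun A hA => ((univ.filter fun k => A.2 k = -2).min' (hne A hA).1,
    (univ.filter fun k => A.2 k = 0).min' (hne A hA).2))
  · intro A hA
    rw [Finset.mem_offDiag]
    refine ⟨mem_univ _, mem_univ _, ?_⟩
    have m1 := Finset.min'_mem _ (hne A hA).1
    have m2 := Finset.min'_mem _ (hne A hA).2
    simp only [mem_filter, mem_univ, true_and] at m1 m2
    simp only [ne_eq]
    intro hcontra
    rw [hcontra] at m1
    omega
  · intro A hA B hB heq
    obtain ⟨hA1, hA2, hA3, hA4⟩ := (hS A).1 hA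
    obtain ⟨hB1, hB2, hB3, hB4⟩ := (hS B).1 hB
    simp only [Prod.mk.injEq] at heq
    obtain ⟨e1, e2⟩ := heq
    refine Prod.ext (hA1.trans hB1.symm) (funext fun k => ?_)
    have kA2 := filt_singleton _ hA3 (hne A hA).1 k
    have kA0 := filt_singleton _ hA4 (hne A hA).2 k
    have kB2 := filt_singleton _ hB3 (hne B hB).1 k
    have kB0 := filt_singleton _ hB4 (hne B hB).2 k
    simp only [mem_filter, mem_univ, true_and] at kA2 kA0 kB2 kB0
    rw [e1] at kA2
    rw [e2] at kA0
    have i2 : A.2 k = -2 ↔ B.2 k = -2 := kA2.trans kB2.symm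
    have i0 : A.2 k = 0 ↔ B.2 k = 0 := kA0.trans kB0.symm
    rcases hA2 k with h | h | h <;> rcases hB2 k with h' | h' | h' <;>
      rw [h, h'] at i2 i0 ⊢ <;> omega
  · intro p hp
    rw [Finset.mem_offDiag] at hp
    obtain ⟨-, -, hptu⟩ := hp
    have hf2 : (univ.filter fun k =>
        ((3, fun k => if k = p.1 then -2 else if k = p.2 then 0 else -1) :
          ℤ × (Fin 8 → ℤ)).2 k = -2) = {p.1} := by
      ext k
      simp only [mem_filter, mem_univ, true_and, Finset.mem_singleton]
      split_ifs with h1 h2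
      · simp [h1]
      · exact ⟨fun hh => absurd hh (by norm_num), fun hh => absurd hh h1⟩
      · exact ⟨fun hh => absurd hh (by norm_num), fun hh => absurd hh h1⟩
    have hf0 : (univ.filter fun k =>
        ((3, fun k => if k = p.1 then -2 else if k = p.2 then 0 else -1) :
          ℤ × (Fin 8 → ℤ)).2 k = 0) = {p.2} := by
      ext k
      simp only [mem_filter, mem_univ, true_and, Finset.mem_singleton]
      split_ifs with h1 h2
      · exact ⟨fun hh => absurd hh (by norm_num), fun hh => absurd (h1 ▸ hh : p.1 = p.2) hptu⟩
      · simp [h2]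
      · exact ⟨fun hh => absurd hh (by norm_num), fun hh => absurd hh h2⟩
    refine ⟨(3, fun k => if k = p.1 then -2 else if k = p.2 then 0 else -1), ?_, ?_⟩
    · rw [hS]
      refine ⟨rfl, fun k => ?_, ?_, ?_⟩
      · simp only
        split_ifs <;> simp
      · rw [hf2]; simp
      · rw [hf0]; simp
    · simp only [hf2, hf0, Finset.min'_singleton]

lemma fiber_three (𝔈 : Finset (ℤ × (Fin 8 → ℤ)))
    (hmem : ∀ A, A ∈ 𝔈 ↔ (∑ k, A.2 k * A.2 k = A.1 * A.1 + 1 ∧ 3 * A.1 + ∑ k, A.2 k = 1)) :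
    (𝔈.filter fun A => A.1 = 3).card = 56 := by
  apply count_three
  intro A
  rw [mem_filter, hmem]
  constructor
  · rintro ⟨⟨hsq, hlin⟩, hv⟩
    rw [hv] at hsq hlin
    have hQ : ∑ k, A.2 k * A.2 k = 10 := by linarith
    have hS : ∑ k, A.2 k = -8 := by linarith
    have h1 : ∑ k, (A.2 k) * (A.2 k + 1) = 2 := by
      rw [Finset.sum_congr rfl (fun k _ => by ring : ∀ k ∈ univ,
        A.2 k * (A.2 k + 1) = A.2 k * A.2 k + A.2 k), Finset.sum_add_distrib, hQ, hS]
      norm_num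
    have h2 : ∑ k, (A.2 k + 1) * (A.2 k + 2) = 2 := by
      rw [Finset.sum_congr rfl (fun k _ => by ring : ∀ k ∈ univ,
        (A.2 k + 1) * (A.2 k + 2) = (A.2 k * A.2 k + 3 * A.2 k) + 2), Finset.sum_add_distrib,
        Finset.sum_add_distrib, Finset.sum_const, card_univ, Fintype.card_fin]
      have : ∑ k, 3 * A.2 k = 3 * ∑ k, A.2 k := by rw [Finset.mul_sum]
      rw [this, hQ, hS]
      norm_num
    have htri : ∀ k, A.2 k = -2 ∨ A.2 k = -1 ∨ A.2 k = 0 := by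
      intro k
      have b1 : A.2 k * (A.2 k + 1) ≤ 2 := by
        rw [← h1]
        exact Finset.single_le_sum (fun j _ => adj_nonneg (A.2 j)) (mem_univ k)
      have b2 : (A.2 k + 1) * (A.2 k + 2) ≤ 2 := by
        have hb := Finset.single_le_sum (f := fun j => (A.2 j + 1) * (A.2 j + 1 + 1))
          (fun j _ => adj_nonneg (A.2 j + 1)) (mem_univ k)
        have he : ∑ j, (A.2 j + 1) * (A.2 j + 1 + 1) = 2 := by
          rw [← h2]; exact Finset.sum_congr rfl (fun j _ => by ring)
        calc (A.2 k + 1) * (A.2 k + 2) = (A.2 k + 1) * (A.2 k + 1 + 1) := by ring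
          _ ≤ 2 := he ▸ hb
      have hge : -2 ≤ A.2 k := by nlinarith [b1, sq_nonneg (A.2 k + 3)]
      have hle : A.2 k ≤ 0 := by nlinarith [b2, sq_nonneg (A.2 k - 1)]
      omega
    have hs3 := sum_three A.2 (-2) id htri
    have hq3 := sum_three A.2 (-2) (fun x => x * x) htri
    have hc3 := card_three A.2 (-2) htri
    simp only [id] at hs3 hq3
    norm_num at hs3 hq3 hc3
    have e1 : -2 * ((univ.filter fun k => A.2 k = -2).card : ℤ)
        - ((univ.filter fun k => A.2 k = -1).card : ℤ) = -8 := by linarith [hs3, hS]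
    have e2 : 4 * ((univ.filter fun k => A.2 k = -2).card : ℤ)
        + ((univ.filter fun k => A.2 k = -1).card : ℤ) = 10 := by linarith [hq3, hQ]
    exact ⟨hv, htri, by omega, by omega⟩
  · rintro ⟨hv, htri, h2c, h0c⟩
    have hs3 := sum_three A.2 (-2) id htri
    have hq3 := sum_three A.2 (-2) (fun x => x * x) htri
    have hc3 := card_three A.2 (-2) htri
    simp only [id] at hs3 hq3
    norm_num at hs3 hq3 hc3
    have c2v : ((univ.filter fun k => A.2 k = -2).card : ℤ) = 1 := by exact_mod_cast h2c
    have c1v : ((univ.filter fun k => A.2 k = -1).card : ℤ) = 6 := by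
      have : (univ.filter fun k => A.2 k = -1).card = 6 := by omega
      exact_mod_cast this
    refine ⟨⟨?_, ?_⟩, hv⟩
    · rw [hv]; linarith [hq3, c2v, c1v]
    · rw [hv]; linarith [hs3, c2v, c1v]

lemma core {n : ℕ} (hn : 0 < n) (𝔈 : Finset (ℤ × (Fin n → ℤ)))
    (hmem : ∀ A, A ∈ 𝔈 ↔ (∑ k, A.2 k * A.2 k = A.1 * A.1 + 1 ∧ 3 * A.1 + ∑ k, A.2 k = 1))
    (i : Fin n) :
    ∑ A ∈ 𝔈, ((-(A.2 i) : ℚ) * ((A.1 : ℚ)/3 + (A.2 i : ℚ)))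
      = (-((∑ A ∈ 𝔈, A.1 : ℤ) : ℚ)/3 - (𝔈.card : ℚ)) / (n : ℚ) := by
  have hmapmem : ∀ (j : Fin n) (A : ℤ × (Fin n → ℤ)), A ∈ 𝔈 →
      ((A.1, A.2 ∘ Equiv.swap i j) : ℤ × (Fin n → ℤ)) ∈ 𝔈 := by
    intro j A hA
    rw [hmem] at hA ⊢
    have e1 : ∑ k, (A.2 ∘ Equiv.swap i j) k * (A.2 ∘ Equiv.swap i j) k
        = ∑ k, A.2 k * A.2 k := Equiv.sum_comp (Equiv.swap i j) (fun k => A.2 k * A.2 k)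
    have e2 : ∑ k, (A.2 ∘ Equiv.swap i j) k = ∑ k, A.2 k :=
      Equiv.sum_comp (Equiv.swap i j) (fun k => A.2 k)
    rw [show ((A.1, A.2 ∘ Equiv.swap i j) : ℤ × (Fin n → ℤ)).1 = A.1 from rfl,
      show ((A.1, A.2 ∘ Equiv.swap i j) : ℤ × (Fin n → ℤ)).2 = A.2 ∘ Equiv.swap i j from rfl,
      e1, e2]
    exact hA
  have hswap : ∀ j : Fin n, ∑ A ∈ 𝔈, ((-(A.2 j) : ℚ) * ((A.1 : ℚ)/3 + (A.2 j : ℚ)))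
      = ∑ A ∈ 𝔈, ((-(A.2 i) : ℚ) * ((A.1 : ℚ)/3 + (A.2 i : ℚ))) := by
    intro j
    refine Finset.sum_nbij' (fun A => (A.1, A.2 ∘ Equiv.swap i j))
      (fun A => (A.1, A.2 ∘ Equiv.swap i j)) (hmapmem j) (hmapmem j) ?_ ?_ ?_
    · intro A _
      refine Prod.ext rfl (funext fun k => ?_)
      simp [Equiv.swap_apply_self]
    · intro A _
      refine Prod.ext rfl (funext fun k => ?_)
      simp [Equiv.swap_apply_self]
    · intro A _
      simp [Equiv.swap_apply_left]
  have hconst : ∀ A ∈ 𝔈, ∑ j : Fin n, ((-(A.2 j) : ℚ) * ((A.1 : ℚ)/3 + (A.2 j : ℚ)))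
      = -(A.1 : ℚ)/3 - 1 := by
    intro A hA
    obtain ⟨hsq, hlin⟩ := (hmem A).1 hA
    have hsq' : ∑ k, ((A.2 k : ℚ) * (A.2 k : ℚ)) = (A.1 : ℚ) * A.1 + 1 := by exact_mod_cast hsq
    have hlin' : ∑ k, (A.2 k : ℚ) = 1 - 3 * (A.1 : ℚ) := by
      exact_mod_cast (by linarith : (∑ k, A.2 k) = 1 - 3 * A.1)
    calc ∑ j : Fin n, ((-(A.2 j) : ℚ) * ((A.1 : ℚ)/3 + (A.2 j : ℚ)))
        = ∑ j : Fin n, (-((A.1 : ℚ)/3) * (A.2 j : ℚ) - (A.2 j : ℚ) * (A.2 j : ℚ)) :=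
          Finset.sum_congr rfl (fun j _ => by ring)
      _ = -((A.1 : ℚ)/3) * (∑ j, (A.2 j : ℚ)) - ∑ j, ((A.2 j : ℚ) * (A.2 j : ℚ)) := by
          rw [Finset.sum_sub_distrib, Finset.mul_sum]
      _ = -(A.1 : ℚ)/3 - 1 := by rw [hlin', hsq']; ring
  have hmul : (n : ℚ) * (∑ A ∈ 𝔈, ((-(A.2 i) : ℚ) * ((A.1 : ℚ)/3 + (A.2 i : ℚ))))
      = -((∑ A ∈ 𝔈, A.1 : ℤ) : ℚ)/3 - (𝔈.card : ℚ) := by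
    calc (n : ℚ) * (∑ A ∈ 𝔈, ((-(A.2 i) : ℚ) * ((A.1 : ℚ)/3 + (A.2 i : ℚ))))
        = ∑ j : Fin n, ∑ A ∈ 𝔈, ((-(A.2 j) : ℚ) * ((A.1 : ℚ)/3 + (A.2 j : ℚ))) := by
          rw [Finset.sum_congr rfl (fun j _ => hswap j), Finset.sum_const, card_univ,
            Fintype.card_fin, nsmul_eq_mul]
      _ = ∑ A ∈ 𝔈, ∑ j : Fin n, ((-(A.2 j) : ℚ) * ((A.1 : ℚ)/3 + (A.2 j : ℚ))) :=
          Finset.sum_comm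
      _ = ∑ A ∈ 𝔈, (-(A.1 : ℚ)/3 - 1) := Finset.sum_congr rfl hconst
      _ = -((∑ A ∈ 𝔈, A.1 : ℤ) : ℚ)/3 - (𝔈.card : ℚ) := by
          rw [Finset.sum_sub_distrib, Finset.sum_const, nsmul_eq_mul, mul_one]
          congr 1
          rw [← Finset.sum_div]
          congr 1
          rw [Finset.sum_neg_distrib]
          congr 1
          push_cast
          rfl
  rw [eq_div_iff (by positivity : (n : ℚ) ≠ 0)]
  linarith [hmul]

lemma a0_bound {n : ℕ} (A : ℤ × (Fin n → ℤ))
    (hsq : ∑ k, A.2 k * A.2 k = A.1 * A.1 + 1) (hlin : 3 * A.1 + ∑ k, A.2 k = 1) :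
    (1 - 3 * A.1)^2 ≤ (A.1 * A.1 + 1) * (n : ℤ) := by
  have cs := Finset.sum_mul_sq_le_sq_mul_sq univ A.2 (fun _ => (1 : ℤ))
  simp only [mul_one, one_pow, Finset.sum_const, card_univ, Fintype.card_fin,
    nsmul_eq_mul] at cs
  have e : ∑ k, (A.2 k)^2 = ∑ k, A.2 k * A.2 k := Finset.sum_congr rfl fun k _ => by ring
  rw [e, hsq] at cs
  have e2 : ∑ k, A.2 k = 1 - 3 * A.1 := by linarith
  rw [e2] at cs
  exact cs

/-- For the del Pezzo surface `X_r` (`4 ≤ r ≤ 8`), encoding an element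
`A = a₀H + ∑ a_k E_k` of `L = ℤH ⊕ ℤE₁ ⊕ ⋯ ⊕ ℤE_r` as the pair `(a₀, (a₁,…,a_r))`
(so `A·B = a₀b₀ − ∑ a_k b_k`), with `c₁ = 3H − ∑ E_i`, `H` and `E_i` the basis classes,
and `𝔈_r` the (finite) set of exceptional classes `{A : A·A = −1, A·c₁ = 1}`:
for every `i`, `∑_{A ∈ 𝔈_r} (A·E_i)·((A·H)/3 − A·E_i) = d_r`, where
`d₄ = −3, d₅ = −4, d₆ = −6, d₇ = −12, d₈ = −60`. -/
theorem diagonal_entries_of_quantum_c₁_matrix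
    (r : ℕ) (hr4 : 4 ≤ r) (hr8 : r ≤ 8)
    (inter : (ℤ × (Fin r → ℤ)) → (ℤ × (Fin r → ℤ)) → ℤ)
    (hinter : ∀ A B, inter A B = A.1 * B.1 - ∑ k, A.2 k * B.2 k)
    (c₁ : ℤ × (Fin r → ℤ)) (hc₁ : c₁ = (3, fun _ => -1))
    (HH : ℤ × (Fin r → ℤ)) (hHH : HH = (1, fun _ => 0))
    (EE : Fin r → ℤ × (Fin r → ℤ))
    (hEE : ∀ i, EE i = (0, fun k => if k = i then 1 else 0))
    (𝔈 : Finset (ℤ × (Fin r → ℤ)))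
    (h𝔈 : ∀ A, A ∈ 𝔈 ↔ (inter A A = -1 ∧ inter A c₁ = 1)) :
    ∀ i : Fin r,
      ∑ A ∈ 𝔈, ((inter A (EE i) : ℚ)) * ((inter A HH : ℚ) / 3 - (inter A (EE i) : ℚ)) =
        if r = 4 then -3 else if r = 5 then -4 else if r = 6 then -6
          else if r = 7 then -12 else -60 := by
  intro i
  have hmem : ∀ A : ℤ × (Fin r → ℤ), A ∈ 𝔈 ↔
      (∑ k, A.2 k * A.2 k = A.1 * A.1 + 1 ∧ 3 * A.1 + ∑ k, A.2 k = 1) := by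
    intro A
    rw [h𝔈 A, hinter, hinter, hc₁]
    simp only [mul_neg, mul_one, Finset.sum_neg_distrib, sub_neg_eq_add]
    constructor <;> rintro ⟨h1, h2⟩ <;> exact ⟨by linarith, by linarith⟩
  have hsummand : ∀ A : ℤ × (Fin r → ℤ),
      ((inter A (EE i) : ℚ)) * ((inter A HH : ℚ) / 3 - (inter A (EE i) : ℚ))
        = (-(A.2 i) : ℚ) * ((A.1 : ℚ)/3 + (A.2 i : ℚ)) := by
    intro A
    have e1 : inter A (EE i) = -A.2 i := by
      rw [hinter, hEE]
      simp [mul_ite]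
    have e2 : inter A HH = A.1 := by rw [hinter, hHH]; simp
    rw [e1, e2]
    push_cast
    ring
  rw [Finset.sum_congr rfl (fun A _ => hsummand A), core (by omega) 𝔈 hmem i]
  -- fiber helper
  have hfsum : ∀ v : ℤ, ∑ A ∈ 𝔈.filter (fun A => A.1 = v), A.1
      = (𝔈.filter (fun A => A.1 = v)).card • v := by
    intro v
    rw [Finset.sum_congr rfl (fun A hA => (mem_filter.1 hA).2)]
    exact Finset.sum_const v
  interval_cases r
  · -- r = 4
    have hmaps : ∀ A ∈ 𝔈, A.1 ∈ Finset.Icc (0:ℤ) 1 := by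
      intro A hA
      obtain ⟨hsq, hlin⟩ := (hmem A).1 hA
      have hb := a0_bound A hsq hlin
      norm_num at hb
      rw [mem_Icc]
      constructor
      · nlinarith [hb, sq_nonneg (A.1 + 1)]
      · nlinarith [hb, sq_nonneg (A.1 - 2)]
    have hc0 : (𝔈.filter fun A => A.1 = 0).card = 4 :=
      (fiber_card 𝔈 hmem 0 0 3 (by norm_num) (by norm_num)).trans (by decide)
    have hc1 : (𝔈.filter fun A => A.1 = 1).card = 6 :=
      (fiber_card 𝔈 hmem 1 (-1) 2 (by norm_num) (by norm_num)).trans (by decide)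
    have hN : 𝔈.card = 10 := by
      rw [Finset.card_eq_sum_card_fiberwise hmaps,
        show (Finset.Icc (0:ℤ) 1) = {0, 1} from by decide,
        Finset.sum_insert (by decide), Finset.sum_singleton, hc0, hc1]
    have hT : ∑ A ∈ 𝔈, A.1 = 6 := by
      rw [← Finset.sum_fiberwise_of_maps_to hmaps (fun A => A.1),
        show (Finset.Icc (0:ℤ) 1) = {0, 1} from by decide,
        Finset.sum_insert (by decide), Finset.sum_singleton, hfsum 0, hfsum 1, hc0, hc1]
      norm_num
    rw [hN, hT]
    norm_num
  · -- r = 5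
    have hmaps : ∀ A ∈ 𝔈, A.1 ∈ Finset.Icc (0:ℤ) 2 := by
      intro A hA
      obtain ⟨hsq, hlin⟩ := (hmem A).1 hA
      have hb := a0_bound A hsq hlin
      norm_num at hb
      rw [mem_Icc]
      constructor
      · nlinarith [hb, sq_nonneg (A.1 + 1)]
      · nlinarith [hb, sq_nonneg (A.1 - 3)]
    have hc0 : (𝔈.filter fun A => A.1 = 0).card = 5 :=
      (fiber_card 𝔈 hmem 0 0 4 (by norm_num) (by norm_num)).trans (by decide)
    have hc1 : (𝔈.filter fun A => A.1 = 1).card = 10 :=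
      (fiber_card 𝔈 hmem 1 (-1) 2 (by norm_num) (by norm_num)).trans (by decide)
    have hc2 : (𝔈.filter fun A => A.1 = 2).card = 1 :=
      (fiber_card 𝔈 hmem 2 (-1) 5 (by norm_num) (by norm_num)).trans (by decide)
    have hN : 𝔈.card = 16 := by
      rw [Finset.card_eq_sum_card_fiberwise hmaps,
        show (Finset.Icc (0:ℤ) 2) = {0, 1, 2} from by decide,
        Finset.sum_insert (by decide), Finset.sum_insert (by decide), Finset.sum_singleton,
        hc0, hc1, hc2]
      norm_num
    have hT : ∑ A ∈ 𝔈, A.1 = 12 := by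
      rw [← Finset.sum_fiberwise_of_maps_to hmaps (fun A => A.1),
        show (Finset.Icc (0:ℤ) 2) = {0, 1, 2} from by decide,
        Finset.sum_insert (by decide), Finset.sum_insert (by decide), Finset.sum_singleton,
        hfsum 0, hfsum 1, hfsum 2, hc0, hc1, hc2]
      norm_num
    rw [hN, hT]
    norm_num
  · -- r = 6
    have hmaps : ∀ A ∈ 𝔈, A.1 ∈ Finset.Icc (0:ℤ) 2 := by
      intro A hA
      obtain ⟨hsq, hlin⟩ := (hmem A).1 hA
      have hb := a0_bound A hsq hlin
      norm_num at hb
      rw [mem_Icc]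
      constructor
      · nlinarith [hb, sq_nonneg (A.1 + 1)]
      · nlinarith [hb, sq_nonneg (A.1 - 3)]
    have hc0 : (𝔈.filter fun A => A.1 = 0).card = 6 :=
      (fiber_card 𝔈 hmem 0 0 5 (by norm_num) (by norm_num)).trans (by decide)
    have hc1 : (𝔈.filter fun A => A.1 = 1).card = 15 :=
      (fiber_card 𝔈 hmem 1 (-1) 2 (by norm_num) (by norm_num)).trans (by decide)
    have hc2 : (𝔈.filter fun A => A.1 = 2).card = 6 :=
      (fiber_card 𝔈 hmem 2 (-1) 5 (by norm_num) (by norm_num)).trans (by decide)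
    have hN : 𝔈.card = 27 := by
      rw [Finset.card_eq_sum_card_fiberwise hmaps,
        show (Finset.Icc (0:ℤ) 2) = {0, 1, 2} from by decide,
        Finset.sum_insert (by decide), Finset.sum_insert (by decide), Finset.sum_singleton,
        hc0, hc1, hc2]
      norm_num
    have hT : ∑ A ∈ 𝔈, A.1 = 27 := by
      rw [← Finset.sum_fiberwise_of_maps_to hmaps (fun A => A.1),
        show (Finset.Icc (0:ℤ) 2) = {0, 1, 2} from by decide,
        Finset.sum_insert (by decide), Finset.sum_insert (by decide), Finset.sum_singleton,
        hfsum 0, hfsum 1, hfsum 2, hc0, hc1, hc2]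
      norm_num
    rw [hN, hT]
    norm_num
  · -- r = 7
    have hmaps : ∀ A ∈ 𝔈, A.1 ∈ Finset.Icc (0:ℤ) 3 := by
      intro A hA
      obtain ⟨hsq, hlin⟩ := (hmem A).1 hA
      have hb := a0_bound A hsq hlin
      norm_num at hb
      rw [mem_Icc]
      constructor
      · nlinarith [hb, sq_nonneg (A.1 + 1)]
      · nlinarith [hb, sq_nonneg (A.1 - 4)]
    have hc0 : (𝔈.filter fun A => A.1 = 0).card = 7 :=
      (fiber_card 𝔈 hmem 0 0 6 (by norm_num) (by norm_num)).trans (by decide)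
    have hc1 : (𝔈.filter fun A => A.1 = 1).card = 21 :=
      (fiber_card 𝔈 hmem 1 (-1) 2 (by norm_num) (by norm_num)).trans (by decide)
    have hc2 : (𝔈.filter fun A => A.1 = 2).card = 21 :=
      (fiber_card 𝔈 hmem 2 (-1) 5 (by norm_num) (by norm_num)).trans (by decide)
    have hc3 : (𝔈.filter fun A => A.1 = 3).card = 7 :=
      (fiber_card 𝔈 hmem 3 (-2) 1 (by norm_num) (by norm_num)).trans (by decide)
    have hN : 𝔈.card = 56 := by
      rw [Finset.card_eq_sum_card_fiberwise hmaps,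
        show (Finset.Icc (0:ℤ) 3) = {0, 1, 2, 3} from by decide,
        Finset.sum_insert (by decide), Finset.sum_insert (by decide),
        Finset.sum_insert (by decide), Finset.sum_singleton, hc0, hc1, hc2, hc3]
      norm_num
    have hT : ∑ A ∈ 𝔈, A.1 = 84 := by
      rw [← Finset.sum_fiberwise_of_maps_to hmaps (fun A => A.1),
        show (Finset.Icc (0:ℤ) 3) = {0, 1, 2, 3} from by decide,
        Finset.sum_insert (by decide), Finset.sum_insert (by decide),
        Finset.sum_insert (by decide), Finset.sum_singleton,
        hfsum 0, hfsum 1, hfsum 2, hfsum 3, hc0, hc1, hc2, hc3]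
      norm_num
    rw [hN, hT]
    norm_num
  · -- r = 8
    have hmaps : ∀ A ∈ 𝔈, A.1 ∈ Finset.Icc (-1:ℤ) 7 := by
      intro A hA
      obtain ⟨hsq, hlin⟩ := (hmem A).1 hA
      have hb := a0_bound A hsq hlin
      norm_num at hb
      rw [mem_Icc]
      constructor
      · nlinarith [hb, sq_nonneg (A.1 + 2)]
      · nlinarith [hb, sq_nonneg (A.1 - 8)]
    have hcm1 : (𝔈.filter fun A => A.1 = -1) = ∅ :=
      fiber_empty 𝔈 hmem (-1) 0 (by norm_num)
    have hc7 : (𝔈.filter fun A => A.1 = 7) = ∅ :=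
      fiber_empty 𝔈 hmem 7 (-3) (by norm_num)
    have hc0 : (𝔈.filter fun A => A.1 = 0).card = 8 :=
      (fiber_card 𝔈 hmem 0 0 7 (by norm_num) (by norm_num)).trans (by decide)
    have hc1 : (𝔈.filter fun A => A.1 = 1).card = 28 :=
      (fiber_card 𝔈 hmem 1 (-1) 2 (by norm_num) (by norm_num)).trans (by decide)
    have hc2 : (𝔈.filter fun A => A.1 = 2).card = 56 :=
      (fiber_card 𝔈 hmem 2 (-1) 5 (by norm_num) (by norm_num)).trans (by decide)
    have hc3 : (𝔈.filter fun A => A.1 = 3).card = 56 := fiber_three 𝔈 hmem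
    have hc4 : (𝔈.filter fun A => A.1 = 4).card = 56 :=
      (fiber_card 𝔈 hmem 4 (-2) 3 (by norm_num) (by norm_num)).trans (by decide)
    have hc5 : (𝔈.filter fun A => A.1 = 5).card = 28 :=
      (fiber_card 𝔈 hmem 5 (-2) 6 (by norm_num) (by norm_num)).trans (by decide)
    have hc6 : (𝔈.filter fun A => A.1 = 6).card = 8 :=
      (fiber_card 𝔈 hmem 6 (-3) 1 (by norm_num) (by norm_num)).trans (by decide)
    have hN : 𝔈.card = 240 := by
      rw [Finset.card_eq_sum_card_fiberwise hmaps,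
        show (Finset.Icc (-1:ℤ) 7) = {-1, 0, 1, 2, 3, 4, 5, 6, 7} from by decide,
        Finset.sum_insert (by decide), Finset.sum_insert (by decide),
        Finset.sum_insert (by decide), Finset.sum_insert (by decide),
        Finset.sum_insert (by decide), Finset.sum_insert (by decide),
        Finset.sum_insert (by decide), Finset.sum_insert (by decide), Finset.sum_singleton,
        hcm1, hc7, hc0, hc1, hc2, hc3, hc4, hc5, hc6]
      norm_num
    have hT : ∑ A ∈ 𝔈, A.1 = 720 := by
      rw [← Finset.sum_fiberwise_of_maps_to hmaps (fun A => A.1),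
        show (Finset.Icc (-1:ℤ) 7) = {-1, 0, 1, 2, 3, 4, 5, 6, 7} from by decide,
        Finset.sum_insert (by decide), Finset.sum_insert (by decide),
        Finset.sum_insert (by decide), Finset.sum_insert (by decide),
        Finset.sum_insert (by decide), Finset.sum_insert (by decide),
        Finset.sum_insert (by decide), Finset.sum_insert (by decide), Finset.sum_singleton,
        hcm1, hc7, hfsum 0, hfsum 1, hfsum 2, hfsum 3, hfsum 4, hfsum 5, hfsum 6,
        hc0, hc1, hc2, hc3, hc4, hc5, hc6]
      norm_num
    rw [hN, hT]
    norm_num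
end

section
/- Fix an integer r with 4 ≤ r ≤ 8 and let L = ℤH ⊕ ℤE₁ ⊕ ⋯ ⊕ ℤE_r carry the bilinear form H·H = 1, E_i·E_i = −1, H·E_i = E_i·E_j = 0 (i ≠ j), with c₁ = 3H − ∑_{i=1}^r E_i, and let 𝔈_r = { A ∈ L : A·A = −1 and A·c₁ = 1 }. Then for all i, j ∈ {1,…,r} with i ≠ j, the rational number ∑_{A ∈ 𝔈_r} (A·E_i)·((A·H)/3 − A·E_j) equals 0. -/
/-- The indicator-type function used for the reflection in the root `H - E_j - E_k - E_l`. -/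
private def dPdlt {r : ℕ} (j k l : Fin r) : Fin r → ℤ := fun m =>
  (if m = j then 1 else 0) + (if m = k then 1 else 0) + (if m = l then 1 else 0)

/-- The reflection in the root `H - E_j - E_k - E_l`, in coordinates. -/
private def dPrefl {r : ℕ} (j k l : Fin r) (A : ℤ × (Fin r → ℤ)) : ℤ × (Fin r → ℤ) :=
  (A.1 + (A.1 + A.2 j + A.2 k + A.2 l),
   fun m => A.2 m - (A.1 + A.2 j + A.2 k + A.2 l) * dPdlt j k l m)

private lemma dPdlt_sq {r : ℕ} {j k l : Fin r} (hjk : j ≠ k) (hjl : j ≠ l) (hkl : k ≠ l)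
    (m : Fin r) : dPdlt j k l m * dPdlt j k l m = dPdlt j k l m := by
  unfold dPdlt
  by_cases h1 : m = j <;> by_cases h2 : m = k <;> by_cases h3 : m = l <;> simp_all

private lemma dPdlt_sum {r : ℕ} {j k l : Fin r} (hjk : j ≠ k) (hjl : j ≠ l) (hkl : k ≠ l) :
    ∑ m, dPdlt j k l m = 3 := by
  unfold dPdlt
  rw [Finset.sum_add_distrib, Finset.sum_add_distrib]
  simp

private lemma dPdlt_mul_sum {r : ℕ} {j k l : Fin r} (hjk : j ≠ k) (hjl : j ≠ l) (hkl : k ≠ l)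
    (a : Fin r → ℤ) : ∑ m, a m * dPdlt j k l m = a j + a k + a l := by
  unfold dPdlt
  simp only [mul_add]
  rw [Finset.sum_add_distrib, Finset.sum_add_distrib]
  simp

/-- Invariance of the exceptional set under coordinate swaps gives equality of
the mixed sums. -/
private lemma dP_swap_sum {r : ℕ} (𝔈 : Finset (ℤ × (Fin r → ℤ)))
    (hmem : ∀ A, A ∈ 𝔈 ↔
      (A.1 * A.1 - ∑ m, A.2 m * A.2 m = -1 ∧ 3 * A.1 + ∑ m, A.2 m = 1))
    (i k l : Fin r) (hik : i ≠ k) (hil : i ≠ l) :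
    ∑ A ∈ 𝔈, A.2 i * A.2 k = ∑ A ∈ 𝔈, A.2 i * A.2 l := by
  set σ : (ℤ × (Fin r → ℤ)) → (ℤ × (Fin r → ℤ)) :=
    fun A => (A.1, A.2 ∘ Equiv.swap k l) with hσ
  have hmap : ∀ A ∈ 𝔈, σ A ∈ 𝔈 := by
    intro A hA
    rw [hmem] at hA ⊢
    have e1 : ∑ m, A.2 (Equiv.swap k l m) * A.2 (Equiv.swap k l m)
        = ∑ m, A.2 m * A.2 m := Equiv.sum_comp (Equiv.swap k l) (fun m => A.2 m * A.2 m)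
    have e2 : ∑ m, A.2 (Equiv.swap k l m) = ∑ m, A.2 m :=
      Equiv.sum_comp (Equiv.swap k l) A.2
    refine ⟨?_, ?_⟩
    · show A.1 * A.1 - ∑ m, (A.2 ∘ Equiv.swap k l) m * (A.2 ∘ Equiv.swap k l) m = -1
      simp only [Function.comp_apply]
      rw [e1]; exact hA.1
    · show 3 * A.1 + ∑ m, (A.2 ∘ Equiv.swap k l) m = 1
      simp only [Function.comp_apply]
      rw [e2]; exact hA.2
  have hinv : ∀ A ∈ 𝔈, σ (σ A) = A := by
    intro A _
    simp only [hσ]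
    refine Prod.ext rfl ?_
    funext m
    simp [Function.comp, Equiv.swap_apply_self]
  refine Finset.sum_nbij' σ σ hmap hmap hinv hinv ?_
  intro A _
  simp only [hσ]
  rw [Function.comp_apply, Function.comp_apply,
    Equiv.swap_apply_of_ne_of_ne hik hil, Equiv.swap_apply_right]

/-- Invariance of the exceptional set under the reflection in `H - E_j - E_k - E_l`. -/
private lemma dP_refl_sum {r : ℕ} (𝔈 : Finset (ℤ × (Fin r → ℤ)))
    (hmem : ∀ A, A ∈ 𝔈 ↔
      (A.1 * A.1 - ∑ m, A.2 m * A.2 m = -1 ∧ 3 * A.1 + ∑ m, A.2 m = 1))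
    (i j k l : Fin r) (hij : i ≠ j) (hik : i ≠ k) (hil : i ≠ l)
    (hjk : j ≠ k) (hjl : j ≠ l) (hkl : k ≠ l) :
    ∑ A ∈ 𝔈, A.2 i * (A.1 + A.2 j + A.2 k + A.2 l) = 0 := by
  have hdj : dPdlt j k l j = 1 := by simp [dPdlt, hjk, hjl]
  have hdk : dPdlt j k l k = 1 := by simp [dPdlt, hjk.symm, hkl]
  have hdl : dPdlt j k l l = 1 := by simp [dPdlt, hjl.symm, hkl.symm]
  have hdi : dPdlt j k l i = 0 := by simp [dPdlt, hij, hik, hil]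
  have expand : ∀ (a : Fin r → ℤ) (s : ℤ),
      ∑ m, (a m - s * dPdlt j k l m) * (a m - s * dPdlt j k l m)
        = (∑ m, a m * a m) - 2 * s * (a j + a k + a l) + s * s * 3 := by
    intro a s
    have h : ∀ m, (a m - s * dPdlt j k l m) * (a m - s * dPdlt j k l m)
        = (a m * a m - 2 * s * (a m * dPdlt j k l m))
          + s * s * (dPdlt j k l m * dPdlt j k l m) := fun m => by ring
    rw [Finset.sum_congr rfl fun m _ => h m, Finset.sum_add_distrib,
      Finset.sum_sub_distrib, ← Finset.mul_sum, ← Finset.mul_sum,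
      dPdlt_mul_sum hjk hjl hkl a,
      Finset.sum_congr rfl fun m _ => dPdlt_sq hjk hjl hkl m, dPdlt_sum hjk hjl hkl]
  have expand1 : ∀ (a : Fin r → ℤ) (s : ℤ),
      ∑ m, (a m - s * dPdlt j k l m) = (∑ m, a m) - s * 3 := by
    intro a s
    rw [Finset.sum_sub_distrib, ← Finset.mul_sum, dPdlt_sum hjk hjl hkl]
  have hmap : ∀ A ∈ 𝔈, dPrefl j k l A ∈ 𝔈 := by
    intro A hA
    rw [hmem] at hA ⊢
    obtain ⟨h1, h2⟩ := hA
    constructor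
    · show (A.1 + (A.1 + A.2 j + A.2 k + A.2 l)) * (A.1 + (A.1 + A.2 j + A.2 k + A.2 l))
        - ∑ m, (A.2 m - (A.1 + A.2 j + A.2 k + A.2 l) * dPdlt j k l m)
          * (A.2 m - (A.1 + A.2 j + A.2 k + A.2 l) * dPdlt j k l m) = -1
      rw [expand]
      linear_combination h1
    · show 3 * (A.1 + (A.1 + A.2 j + A.2 k + A.2 l))
        + ∑ m, (A.2 m - (A.1 + A.2 j + A.2 k + A.2 l) * dPdlt j k l m) = 1
      rw [expand1]
      linear_combination h2
  have hinv : ∀ A ∈ 𝔈, dPrefl j k l (dPrefl j k l A) = A := by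
    intro A _
    unfold dPrefl
    refine Prod.ext ?_ ?_
    · simp only [hdj, hdk, hdl]
      ring
    · funext m
      simp only [hdj, hdk, hdl]
      ring
  have main : ∑ A ∈ 𝔈, A.2 i * (A.1 + (A.1 + A.2 j + A.2 k + A.2 l))
      = ∑ A ∈ 𝔈, A.2 i * A.1 := by
    refine Finset.sum_nbij' (dPrefl j k l) (dPrefl j k l) hmap hmap hinv hinv ?_
    intro A _
    show A.2 i * (A.1 + (A.1 + A.2 j + A.2 k + A.2 l))
      = (A.2 i - (A.1 + A.2 j + A.2 k + A.2 l) * dPdlt j k l i)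
        * (A.1 + (A.1 + A.2 j + A.2 k + A.2 l))
    rw [hdi]
    ring
  have split : ∑ A ∈ 𝔈, A.2 i * (A.1 + (A.1 + A.2 j + A.2 k + A.2 l))
      = ∑ A ∈ 𝔈, A.2 i * A.1 + ∑ A ∈ 𝔈, A.2 i * (A.1 + A.2 j + A.2 k + A.2 l) := by
    rw [← Finset.sum_add_distrib]
    exact Finset.sum_congr rfl fun A _ => by ring
  rw [split] at main
  linarith

/-- For the del Pezzo surface `X_r` (`4 ≤ r ≤ 8`), encoding an element
`A = a₀H + ∑ a_k E_k` of `L = ℤH ⊕ ℤE₁ ⊕ ⋯ ⊕ ℤE_r` as the pair `(a₀, (a₁,…,a_r))`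
(so `A·B = a₀b₀ − ∑ a_k b_k`), with `c₁ = 3H − ∑ E_i`, `H` and `E_i` the basis classes,
and `𝔈_r` the (finite) set of exceptional classes `{A : A·A = −1, A·c₁ = 1}`:
for all `i ≠ j`, `∑_{A ∈ 𝔈_r} (A·E_i)·((A·H)/3 − A·E_j) = 0`. -/
theorem off_diagonal_entries_of_quantum_c₁_matrix_vanish
    (r : ℕ) (hr4 : 4 ≤ r) (hr8 : r ≤ 8)
    (inter : (ℤ × (Fin r → ℤ)) → (ℤ × (Fin r → ℤ)) → ℤ)
    (hinter : ∀ A B, inter A B = A.1 * B.1 - ∑ k, A.2 k * B.2 k)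
    (c₁ : ℤ × (Fin r → ℤ)) (hc₁ : c₁ = (3, fun _ => -1))
    (HH : ℤ × (Fin r → ℤ)) (hHH : HH = (1, fun _ => 0))
    (EE : Fin r → ℤ × (Fin r → ℤ))
    (hEE : ∀ i, EE i = (0, fun k => if k = i then 1 else 0))
    (𝔈 : Finset (ℤ × (Fin r → ℤ)))
    (h𝔈 : ∀ A, A ∈ 𝔈 ↔ (inter A A = -1 ∧ inter A c₁ = 1)) :
    ∀ i j : Fin r, i ≠ j →
      ∑ A ∈ 𝔈, ((inter A (EE i) : ℚ)) * ((inter A HH : ℚ) / 3 - (inter A (EE j) : ℚ)) = 0 := by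
  intro i j hij
  -- coordinate description of membership
  have hmem : ∀ A : ℤ × (Fin r → ℤ), A ∈ 𝔈 ↔
      (A.1 * A.1 - ∑ m, A.2 m * A.2 m = -1 ∧ 3 * A.1 + ∑ m, A.2 m = 1) := by
    intro A
    have e : A.1 * ((3:ℤ), fun _ : Fin r => (-1:ℤ)).1
        - ∑ m, A.2 m * ((3:ℤ), fun _ : Fin r => (-1:ℤ)).2 m = 3 * A.1 + ∑ m, A.2 m := by
      show A.1 * 3 - ∑ m, A.2 m * (-1) = _
      rw [Finset.sum_congr rfl fun m _ => mul_neg_one (A.2 m), Finset.sum_neg_distrib]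
      ring
    rw [h𝔈, hinter, hinter, hc₁, e]
  -- choose two further indices k, l
  have hcard : 1 < (Finset.univ \ {i, j} : Finset (Fin r)).card := by
    rw [Finset.card_sdiff_of_subset (Finset.subset_univ _), Finset.card_univ, Fintype.card_fin,
      Finset.card_pair hij]
    omega
  obtain ⟨k, hk, l, hl, hkl⟩ := Finset.one_lt_card.mp hcard
  rw [Finset.mem_sdiff, Finset.mem_insert, Finset.mem_singleton] at hk hl
  push_neg at hk hl
  obtain ⟨-, hki, hkj⟩ := hk
  obtain ⟨-, hli, hlj⟩ := hl
  have hik : i ≠ k := fun h => hki h.symm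
  have hil : i ≠ l := fun h => hli h.symm
  have hjk : j ≠ k := fun h => hkj h.symm
  have hjl : j ≠ l := fun h => hlj h.symm
  -- the symmetry identities
  have swap1 : ∑ A ∈ 𝔈, A.2 i * A.2 j = ∑ A ∈ 𝔈, A.2 i * A.2 k :=
    dP_swap_sum 𝔈 hmem i j k hij hik
  have swap2 : ∑ A ∈ 𝔈, A.2 i * A.2 j = ∑ A ∈ 𝔈, A.2 i * A.2 l :=
    dP_swap_sum 𝔈 hmem i j l hij hil
  have refl0 : ∑ A ∈ 𝔈, A.2 i * (A.1 + A.2 j + A.2 k + A.2 l) = 0 :=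
    dP_refl_sum 𝔈 hmem i j k l hij hik hil hjk hjl hkl
  have esplit : ∑ A ∈ 𝔈, A.2 i * (A.1 + A.2 j + A.2 k + A.2 l)
      = ∑ A ∈ 𝔈, A.2 i * A.1 + (∑ A ∈ 𝔈, A.2 i * A.2 j
        + (∑ A ∈ 𝔈, A.2 i * A.2 k + ∑ A ∈ 𝔈, A.2 i * A.2 l)) := by
    rw [← Finset.sum_add_distrib, ← Finset.sum_add_distrib, ← Finset.sum_add_distrib]
    exact Finset.sum_congr rfl fun A _ => by ring
  have key : ∑ A ∈ 𝔈, (A.2 i * A.1 + 3 * (A.2 i * A.2 j)) = 0 := by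
    have : ∑ A ∈ 𝔈, (A.2 i * A.1 + 3 * (A.2 i * A.2 j))
        = ∑ A ∈ 𝔈, A.2 i * A.1 + ∑ A ∈ 𝔈, 3 * (A.2 i * A.2 j) := Finset.sum_add_distrib
    rw [this, ← Finset.mul_sum]
    linarith [esplit, refl0, swap1, swap2]
  -- evaluate the intersection pairings
  have hE : ∀ (A : ℤ × (Fin r → ℤ)) (p : Fin r), inter A (EE p) = -A.2 p := by
    intro A p
    rw [hinter, hEE]
    simp
  have hH : ∀ A : ℤ × (Fin r → ℤ), inter A HH = A.1 := by
    intro A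
    rw [hinter, hHH]
    simp
  calc ∑ A ∈ 𝔈, ((inter A (EE i) : ℚ)) * ((inter A HH : ℚ) / 3 - (inter A (EE j) : ℚ))
      = ∑ A ∈ 𝔈, (-(1 : ℚ)/3) * ((A.2 i * A.1 + 3 * (A.2 i * A.2 j) : ℤ) : ℚ) := by
        refine Finset.sum_congr rfl fun A _ => ?_
        rw [hE, hE, hH]
        push_cast
        ring
    _ = (-(1 : ℚ)/3) * ((∑ A ∈ 𝔈, (A.2 i * A.1 + 3 * (A.2 i * A.2 j)) : ℤ) : ℚ) := by
        rw [← Finset.mul_sum]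
        push_cast
        rfl
    _ = 0 := by rw [key]; simp
end

section
/- Fix an integer r with 4 ≤ r ≤ 8 and let L = ℤH ⊕ ℤE₁ ⊕ ⋯ ⊕ ℤE_r carry the bilinear form H·H = 1, E_i·E_i = −1, H·E_i = E_i·E_j = 0 (i ≠ j), with c₁ = 3H − ∑_{i=1}^r E_i. Let 𝔇_r = { A ∈ L : A·A = −1 and A·c₁ = 1 } if 4 ≤ r ≤ 7, and 𝔇₈ = { A ∈ L : A·A = −1 and A·c₁ = 1 } ∪ {c₁} if r = 8. For j ∈ {1,…,r} set S_j = ∑_{A ∈ 𝔇_r} (A·E_j)·(A·H)/3 ∈ ℚ. Then S_j > 0 and (9−r)·S_j + d_r > 0, where d₄ = −3, d₅ = −4, d₆ = −6, d₇ = −12, d₈ = −60. -/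
open Finset

private lemma sum_indic (r : ℕ) (S : Finset (Fin r)) (c : ℤ) :
    ∑ k, (if k ∈ S then c else 0) = S.card * c := by
  rw [Finset.sum_ite_mem, Finset.univ_inter, Finset.sum_const]
  simp [mul_comm]

private lemma aux_card_lower (r : ℕ) (𝔇 : Finset (ℤ × (Fin r → ℤ)))
    (h : ∀ A : ℤ × (Fin r → ℤ),
      (A.1 * A.1 - ∑ k, A.2 k * A.2 k = -1 ∧ 3 * A.1 + ∑ k, A.2 k = 1) → A ∈ 𝔇) :
    r.choose 1 + r.choose 2 ≤ 𝔇.card := by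
  classical
  set g : Finset (Fin r) → ℤ × (Fin r → ℤ) := fun S =>
    if S.card = 1 then ((0:ℤ), fun k => if k ∈ S then 1 else 0)
    else ((1:ℤ), fun k => if k ∈ S then -1 else 0) with hg
  set D : Finset (Finset (Fin r)) :=
    Finset.univ.powersetCard 1 ∪ Finset.univ.powersetCard 2 with hD
  have hDcard : ∀ S ∈ D, S.card = 1 ∨ S.card = 2 := by
    intro S hS
    rcases Finset.mem_union.1 hS with h1 | h2
    · exact Or.inl (Finset.mem_powersetCard.1 h1).2
    · exact Or.inr (Finset.mem_powersetCard.1 h2).2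
  have hsub : D.image g ⊆ 𝔇 := by
    intro A hA
    rcases Finset.mem_image.1 hA with ⟨S, hS, rfl⟩
    rcases hDcard S hS with h1 | h2
    · apply h
      simp only [hg, h1, if_pos]
      constructor
      · have : ∑ k, ((if k ∈ S then (1:ℤ) else 0) * (if k ∈ S then (1:ℤ) else 0)) = S.card * 1 := by
          rw [← sum_indic r S 1]
          exact Finset.sum_congr rfl (fun k _ => by by_cases hk : k ∈ S <;> simp [hk])
        rw [this, h1]; ring
      · rw [sum_indic r S 1, h1]; ring
    · apply h
      have hne : ¬ S.card = 1 := by omega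
      simp only [hg, hne, if_neg, if_false]
      constructor
      · have : ∑ k, ((if k ∈ S then (-1:ℤ) else 0) * (if k ∈ S then (-1:ℤ) else 0)) = S.card * 1 := by
          rw [← sum_indic r S 1]
          exact Finset.sum_congr rfl (fun k _ => by by_cases hk : k ∈ S <;> simp [hk])
        rw [this, h2]; ring
      · rw [sum_indic r S (-1), h2]; ring
  have hinj : Set.InjOn g D := by
    intro S hS T hT hST
    rcases hDcard S hS with h1 | h1 <;> rcases hDcard T hT with h2 | h2
    · simp only [hg, h1, h2, if_pos] at hST
      have := congrArg Prod.snd hST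
      ext k
      have hk := congrFun this k
      by_cases hkS : k ∈ S <;> by_cases hkT : k ∈ T <;> simp [hkS, hkT] at hk ⊢
    · have h2' : ¬ T.card = 1 := by omega
      simp only [hg, h1, h2', if_pos, if_neg, if_false] at hST
      exact absurd (congrArg Prod.fst hST) (by norm_num)
    · have h1' : ¬ S.card = 1 := by omega
      simp only [hg, h1', h2, if_pos, if_neg, if_false] at hST
      exact absurd (congrArg Prod.fst hST) (by norm_num)
    · have h1' : ¬ S.card = 1 := by omega
      have h2' : ¬ T.card = 1 := by omega
      simp only [hg, h1', h2', if_neg, if_false] at hST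
      have := congrArg Prod.snd hST
      ext k
      have hk := congrFun this k
      by_cases hkS : k ∈ S <;> by_cases hkT : k ∈ T <;> simp [hkS, hkT] at hk ⊢
  have hDc : D.card = r.choose 1 + r.choose 2 := by
    rw [hD, Finset.card_union_of_disjoint, Finset.card_powersetCard, Finset.card_powersetCard] <;>
      simp [Finset.disjoint_left, Finset.mem_powersetCard]
    omega
  calc r.choose 1 + r.choose 2 = D.card := hDc.symm
    _ = (D.image g).card := (Finset.card_image_of_injOn hinj).symm
    _ ≤ 𝔇.card := Finset.card_le_card hsub


private lemma sum_indic' (r : ℕ) (S : Finset (Fin r)) (c : ℤ) :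
    ∑ k, (if k ∈ S then c else 0) = S.card * c := by
  rw [Finset.sum_ite_mem, Finset.univ_inter, Finset.sum_const]
  simp [mul_comm]

private lemma aux_card_lower8 (𝔇 : Finset (ℤ × (Fin 8 → ℤ)))
    (h : ∀ A : ℤ × (Fin 8 → ℤ),
      (A.1 * A.1 - ∑ k, A.2 k * A.2 k = -1 ∧ 3 * A.1 + ∑ k, A.2 k = 1) → A ∈ 𝔇) :
    92 ≤ 𝔇.card := by
  classical
  set g : Finset (Fin 8) → ℤ × (Fin 8 → ℤ) := fun S =>
    if S.card = 1 then ((0:ℤ), fun k => if k ∈ S then 1 else 0)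
    else if S.card = 2 then ((1:ℤ), fun k => if k ∈ S then -1 else 0)
    else ((2:ℤ), fun k => if k ∈ S then 0 else -1) with hg
  set D : Finset (Finset (Fin 8)) :=
    Finset.univ.powersetCard 1 ∪ Finset.univ.powersetCard 2 ∪ Finset.univ.powersetCard 3 with hD
  have hDcard : ∀ S ∈ D, S.card = 1 ∨ S.card = 2 ∨ S.card = 3 := by
    intro S hS
    rcases Finset.mem_union.1 hS with h12 | h3
    · rcases Finset.mem_union.1 h12 with h1 | h2
      · exact Or.inl (Finset.mem_powersetCard.1 h1).2
      · exact Or.inr (Or.inl (Finset.mem_powersetCard.1 h2).2)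
    · exact Or.inr (Or.inr (Finset.mem_powersetCard.1 h3).2)
  have hsq : ∀ (S : Finset (Fin 8)) (c : ℤ),
      ∑ k, ((if k ∈ S then c else 0) * (if k ∈ S then c else 0)) = S.card * (c * c) := by
    intro S c
    rw [← sum_indic' 8 S (c * c)]
    exact Finset.sum_congr rfl (fun k _ => by by_cases hk : k ∈ S <;> simp [hk])
  have hsq' : ∀ (S : Finset (Fin 8)),
      ∑ k, ((if k ∈ S then (0:ℤ) else -1) * (if k ∈ S then (0:ℤ) else -1)) = 8 - S.card := by
    intro S
    have : ∀ k, ((if k ∈ S then (0:ℤ) else -1) * (if k ∈ S then (0:ℤ) else -1))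
        = 1 - (if k ∈ S then (1:ℤ) else 0) := by
      intro k; by_cases hk : k ∈ S <;> simp [hk]
    rw [Finset.sum_congr rfl (fun k _ => this k), Finset.sum_sub_distrib, sum_indic' 8 S 1]
    simp
  have hsum' : ∀ (S : Finset (Fin 8)),
      ∑ k, (if k ∈ S then (0:ℤ) else -1) = S.card - 8 := by
    intro S
    have : ∀ k, (if k ∈ S then (0:ℤ) else -1) = (if k ∈ S then (1:ℤ) else 0) - 1 := by
      intro k; by_cases hk : k ∈ S <;> simp [hk]
    rw [Finset.sum_congr rfl (fun k _ => this k), Finset.sum_sub_distrib, sum_indic' 8 S 1]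
    simp
  have hsub : D.image g ⊆ 𝔇 := by
    intro A hA
    rcases Finset.mem_image.1 hA with ⟨S, hS, rfl⟩
    rcases hDcard S hS with h1 | h2 | h3
    · apply h
      simp only [hg, h1, if_pos]
      refine ⟨?_, ?_⟩
      · rw [hsq S 1, h1]; norm_num
      · rw [sum_indic' 8 S 1, h1]; norm_num
    · have e1 : ¬ S.card = 1 := by omega
      have hgS : g S = ((1:ℤ), fun k => if k ∈ S then -1 else 0) := by
        simp only [hg]; rw [if_neg e1, if_pos h2]
      rw [hgS]; apply h
      refine ⟨?_, ?_⟩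
      · rw [hsq S (-1), h2]; norm_num
      · rw [sum_indic' 8 S (-1), h2]; norm_num
    · have e1 : ¬ S.card = 1 := by omega
      have e2 : ¬ S.card = 2 := by omega
      have hgS : g S = ((2:ℤ), fun k => if k ∈ S then 0 else -1) := by
        simp only [hg]; rw [if_neg e1, if_neg e2]
      rw [hgS]; apply h
      refine ⟨?_, ?_⟩
      · rw [hsq' S, h3]; norm_num
      · rw [hsum' S, h3]; norm_num
  have hinj : Set.InjOn g D := by
    intro S hS T hT hST
    have hsnd := congrArg Prod.snd hST
    rcases hDcard S hS with h1 | h1 | h1 <;> rcases hDcard T hT with h2 | h2 | h2 <;>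
      simp only [hg, h1, h2, if_pos, if_neg, if_false,
        show (1:ℕ) ≠ 2 by norm_num, show (1:ℕ) ≠ 3 by norm_num,
        show (2:ℕ) ≠ 1 by norm_num, show (2:ℕ) ≠ 3 by norm_num,
        show (3:ℕ) ≠ 1 by norm_num, show (3:ℕ) ≠ 2 by norm_num] at hsnd <;>
      first
        | (exfalso;
           have hsum := congrArg (fun v : Fin 8 → ℤ => ∑ k, v k) hsnd;
           simp only [sum_indic' 8, hsum'] at hsum;
           rw [h1, h2] at hsum;
           omega)
        | (ext k;
           have hk := congrFun hsnd k;
           by_cases hkS : k ∈ S <;> by_cases hkT : k ∈ T <;> simp [hkS, hkT] at hk ⊢)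
  have hDc : D.card = 92 := by
    have d12 : Disjoint (Finset.univ.powersetCard 1 : Finset (Finset (Fin 8))) (Finset.univ.powersetCard 2) := by
      simp [Finset.disjoint_left, Finset.mem_powersetCard]; omega
    have d123 : Disjoint ((Finset.univ.powersetCard 1 ∪ Finset.univ.powersetCard 2) : Finset (Finset (Fin 8))) (Finset.univ.powersetCard 3) := by
      simp [Finset.disjoint_left, Finset.mem_powersetCard, Finset.mem_union]
      omega
    rw [hD, Finset.card_union_of_disjoint d123, Finset.card_union_of_disjoint d12,
      Finset.card_powersetCard, Finset.card_powersetCard, Finset.card_powersetCard]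
    simp only [Finset.card_univ, Fintype.card_fin]
    decide
  calc (92:ℕ) = D.card := hDc.symm
    _ = (D.image g).card := (Finset.card_image_of_injOn hinj).symm
    _ ≤ 𝔇.card := Finset.card_le_card hsub



set_option maxHeartbeats 1000000


/-- For the del Pezzo surface `X_r` (`4 ≤ r ≤ 8`), encoding an element
`A = a₀H + ∑ a_k E_k` of `L = ℤH ⊕ ℤE₁ ⊕ ⋯ ⊕ ℤE_r` as the pair `(a₀, (a₁,…,a_r))`
(so `A·B = a₀b₀ − ∑ a_k b_k`), with `c₁ = 3H − ∑ E_i`, `H` and `E_i` the basis classes,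
and `𝔇_r` the (finite) set of effective classes of anticanonical degree one, i.e.
`{A : A·A = −1, A·c₁ = 1}` together with `c₁` when `r = 8`: for every `j`, the sum
`S_j = ∑_{A ∈ 𝔇_r} (A·E_j)·(A·H)/3` satisfies `S_j > 0` and `(9 − r)·S_j + d_r > 0`,
where `d₄ = −3, d₅ = −4, d₆ = −6, d₇ = −12, d₈ = −60`. -/
theorem positivity_estimates_for_quantum_c₁_matrix
    (r : ℕ) (hr4 : 4 ≤ r) (hr8 : r ≤ 8)
    (inter : (ℤ × (Fin r → ℤ)) → (ℤ × (Fin r → ℤ)) → ℤ)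
    (hinter : ∀ A B, inter A B = A.1 * B.1 - ∑ k, A.2 k * B.2 k)
    (c₁ : ℤ × (Fin r → ℤ)) (hc₁ : c₁ = (3, fun _ => -1))
    (HH : ℤ × (Fin r → ℤ)) (hHH : HH = (1, fun _ => 0))
    (EE : Fin r → ℤ × (Fin r → ℤ))
    (hEE : ∀ i, EE i = (0, fun k => if k = i then 1 else 0))
    (𝔇 : Finset (ℤ × (Fin r → ℤ)))
    (h𝔇 : ∀ A, A ∈ 𝔇 ↔ ((inter A A = -1 ∧ inter A c₁ = 1) ∨ (r = 8 ∧ A = c₁))) :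
    ∀ j : Fin r,
      0 < ∑ A ∈ 𝔇, ((inter A (EE j) : ℚ)) * (inter A HH : ℚ) / 3 ∧
      0 < ((9 : ℚ) - r) * (∑ A ∈ 𝔇, ((inter A (EE j) : ℚ)) * (inter A HH : ℚ) / 3) +
        (if r = 4 then (-3 : ℚ) else if r = 5 then -4 else if r = 6 then -6
          else if r = 7 then -12 else -60) := by
  classical
  subst hc₁
  intro j
  -- fixed indices
  have h0r : 0 < r := by omega
  have h1r : 1 < r := by omega
  have h2r : 2 < r := by omega
  have h3r : 3 < r := by omega
  set i₀ : Fin r := ⟨0, h0r⟩ with hi₀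
  set i₁ : Fin r := ⟨1, h1r⟩ with hi₁
  set i₂ : Fin r := ⟨2, h2r⟩ with hi₂
  set i₃ : Fin r := ⟨3, h3r⟩ with hi₃
  have ne01 : i₀ ≠ i₁ := by simp [hi₀, hi₁, Fin.ext_iff]
  have ne02 : i₀ ≠ i₂ := by simp [hi₀, hi₂, Fin.ext_iff]
  have ne12 : i₁ ≠ i₂ := by simp [hi₁, hi₂, Fin.ext_iff]
  have ne03 : i₀ ≠ i₃ := by simp [hi₀, hi₃, Fin.ext_iff]
  have ne13 : i₁ ≠ i₃ := by simp [hi₁, hi₃, Fin.ext_iff]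
  have ne23 : i₂ ≠ i₃ := by simp [hi₂, hi₃, Fin.ext_iff]
  -- membership characterization
  have hmem : ∀ A : ℤ × (Fin r → ℤ), A ∈ 𝔇 ↔
      ((A.1 * A.1 - ∑ k, A.2 k * A.2 k = -1 ∧ 3 * A.1 + ∑ k, A.2 k = 1) ∨
        (r = 8 ∧ A = ((3, fun _ => -1) : ℤ × (Fin r → ℤ)))) := by
    intro A
    rw [h𝔇 A, hinter, hinter]
    have e1 : ∑ k, A.2 k * ((3, fun _ => -1) : ℤ × (Fin r → ℤ)).2 k = - ∑ k, A.2 k := by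
      rw [← Finset.sum_neg_distrib]
      exact Finset.sum_congr rfl (fun k _ => by ring)
    have e2 : A.1 * ((3, fun _ => -1) : ℤ × (Fin r → ℤ)).1 - (- ∑ k, A.2 k) = 3 * A.1 + ∑ k, A.2 k := by
      dsimp only; ring
    rw [e1, e2]
  -- generic invariance principle
  have key : ∀ (e : (ℤ × (Fin r → ℤ)) → (ℤ × (Fin r → ℤ))),
      (∀ A, e (e A) = A) → (∀ A, A ∈ 𝔇 → e A ∈ 𝔇) →
      ∀ f : (ℤ × (Fin r → ℤ)) → ℤ, ∑ A ∈ 𝔇, f (e A) = ∑ A ∈ 𝔇, f A := by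
    intro e he hm f
    exact Finset.sum_nbij' e e hm (fun a ha => hm a ha) (fun a _ => he a) (fun a _ => he a)
      (fun a _ => rfl)
  -- swap invariance
  have swapinv : ∀ (s t : Fin r) (f : (ℤ × (Fin r → ℤ)) → ℤ),
      ∑ A ∈ 𝔇, f (A.1, A.2 ∘ (Equiv.swap s t)) = ∑ A ∈ 𝔇, f A := by
    intro s t f
    apply key
    · intro A
      refine Prod.ext rfl (funext fun k => ?_)
      simp [Equiv.swap_apply_self]
    · intro A hA
      rw [hmem] at hA ⊢
      rcases hA with ⟨hq, hl⟩ | ⟨h8, hAc⟩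
      · left
        constructor
        · dsimp only
          simp only [Function.comp_apply]
          rw [Equiv.sum_comp (Equiv.swap s t) (fun k => A.2 k * A.2 k)]
          exact hq
        · dsimp only
          simp only [Function.comp_apply]
          rw [Equiv.sum_comp (Equiv.swap s t) (fun k => A.2 k)]
          exact hl
      · right
        refine ⟨h8, ?_⟩
        rw [hAc]
        rfl
  -- symmetry of moments
  have hVsym : ∀ i k : Fin r, ∑ A ∈ 𝔇, A.2 i = ∑ A ∈ 𝔇, A.2 k := by
    intro i k
    have h := swapinv i k (fun B => B.2 i)
    simpa [Equiv.swap_apply_left] using h.symm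
  have hUsym : ∀ i k : Fin r, ∑ A ∈ 𝔇, A.1 * A.2 i = ∑ A ∈ 𝔇, A.1 * A.2 k := by
    intro i k
    have h := swapinv i k (fun B => B.1 * B.2 i)
    simpa [Equiv.swap_apply_left] using h.symm
  have hXsym : ∀ i k : Fin r, ∑ A ∈ 𝔇, A.2 i * A.2 i = ∑ A ∈ 𝔇, A.2 k * A.2 k := by
    intro i k
    have h := swapinv i k (fun B => B.2 i * B.2 i)
    simpa [Equiv.swap_apply_left] using h.symm
  have hWswap : ∀ (s t i k : Fin r), ∑ A ∈ 𝔇, A.2 (Equiv.swap s t i) * A.2 (Equiv.swap s t k)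
      = ∑ A ∈ 𝔇, A.2 i * A.2 k := by
    intro s t i k
    have h := swapinv s t (fun B => B.2 i * B.2 k)
    simpa using h
  have hWsym : ∀ i k i' k' : Fin r, i ≠ k → i' ≠ k' →
      ∑ A ∈ 𝔇, A.2 i * A.2 k = ∑ A ∈ 𝔇, A.2 i' * A.2 k' := by
    intro i k i' k' hik hik'
    have step1 : ∑ A ∈ 𝔇, A.2 i * A.2 k
        = ∑ A ∈ 𝔇, A.2 i' * A.2 (Equiv.swap i i' k) := by
      have h := hWswap i i' i k
      rw [Equiv.swap_apply_left] at h
      exact h.symm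
    have hne1 : Equiv.swap i i' k ≠ i' := by
      intro hc
      apply hik
      have h2 : (Equiv.swap i i') k = (Equiv.swap i i') i := by
        rw [hc, Equiv.swap_apply_left]
      exact ((Equiv.swap i i').injective h2).symm
    have step2 : ∑ A ∈ 𝔇, A.2 i' * A.2 (Equiv.swap i i' k)
        = ∑ A ∈ 𝔇, A.2 i' * A.2 k' := by
      have h := hWswap (Equiv.swap i i' k) k' i' (Equiv.swap i i' k)
      rw [Equiv.swap_apply_of_ne_of_ne (Ne.symm hne1) hik', Equiv.swap_apply_left] at h
      exact h.symm
    rw [step1, step2]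
  -- linear condition holds for everything in 𝔇
  have hlinA : ∀ A ∈ 𝔇, 3 * A.1 + ∑ k, A.2 k = 1 := by
    intro A hA
    rcases (hmem A).1 hA with ⟨_, hl⟩ | ⟨h8, hAc⟩
    · exact hl
    · rw [hAc]
      dsimp only
      rw [Finset.sum_const, Finset.card_univ, Fintype.card_fin]
      rw [h8]
      norm_num
  -- abbreviations (atoms)
  -- E2 : 3Q + rV = N
  have hE2 : 3 * (∑ A ∈ 𝔇, A.1) + (r : ℤ) * (∑ A ∈ 𝔇, A.2 i₀) = (𝔇.card : ℤ) := by
    have h : ∑ A ∈ 𝔇, (3 * A.1 + ∑ k, A.2 k) = ∑ A ∈ 𝔇, (1:ℤ) :=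
      Finset.sum_congr rfl hlinA
    rw [Finset.sum_add_distrib, ← Finset.mul_sum, Finset.sum_comm] at h
    rw [Finset.sum_congr rfl (fun k (_ : k ∈ Finset.univ) => hVsym k i₀)] at h
    simpa [Finset.sum_const, Finset.card_univ, Fintype.card_fin, nsmul_eq_mul] using h
  -- E1 : P + N - rX = ε
  have hE1 : (∑ A ∈ 𝔇, A.1 * A.1) + (𝔇.card : ℤ) - (r : ℤ) * (∑ A ∈ 𝔇, A.2 i₀ * A.2 i₀)
      = (if r = 8 then 2 else 0) := by
    have hq : ∑ A ∈ 𝔇, (A.1 * A.1 - ∑ k, A.2 k * A.2 k)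
        = -(𝔇.card : ℤ) + (if r = 8 then 2 else 0) := by
      by_cases h8 : r = 8
      · have hc : ((3, fun _ => -1) : ℤ × (Fin r → ℤ)) ∈ 𝔇 := (hmem _).2 (Or.inr ⟨h8, rfl⟩)
        have hn1 : 1 ≤ 𝔇.card := Finset.card_pos.2 ⟨_, hc⟩
        rw [← Finset.sum_erase_add _ _ hc]
        have herase : ∀ A ∈ 𝔇.erase ((3, fun _ => -1) : ℤ × (Fin r → ℤ)),
            A.1 * A.1 - ∑ k, A.2 k * A.2 k = -1 := by
          intro A hA
          obtain ⟨hne, hAD⟩ := Finset.mem_erase.1 hA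
          rcases (hmem A).1 hAD with ⟨hq', _⟩ | ⟨_, hAc⟩
          · exact hq'
          · exact absurd hAc hne
        rw [Finset.sum_congr rfl herase, Finset.sum_const,
          Finset.card_erase_of_mem hc]
        have hv : (((3, fun _ => -1) : ℤ × (Fin r → ℤ)).1 * ((3, fun _ => -1) : ℤ × (Fin r → ℤ)).1
            - ∑ k, ((3, fun _ => -1) : ℤ × (Fin r → ℤ)).2 k * ((3, fun _ => -1) : ℤ × (Fin r → ℤ)).2 k)
            = 9 - (r : ℤ) := by
          dsimp only
          simp [Finset.sum_const, Finset.card_univ, Fintype.card_fin]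
        rw [hv, if_pos h8]
        have hcast : ((𝔇.card - 1 : ℕ) : ℤ) = (𝔇.card : ℤ) - 1 := by omega
        rw [nsmul_eq_mul, hcast]
        omega
      · have hall : ∀ A ∈ 𝔇, A.1 * A.1 - ∑ k, A.2 k * A.2 k = -1 := by
          intro A hA
          rcases (hmem A).1 hA with ⟨hq', _⟩ | ⟨h8', _⟩
          · exact hq'
          · exact absurd h8' h8
        rw [Finset.sum_congr rfl hall, Finset.sum_const, if_neg h8]
        simp [nsmul_eq_mul]
    rw [Finset.sum_sub_distrib, Finset.sum_comm] at hq
    rw [Finset.sum_congr rfl (fun k (_ : k ∈ Finset.univ) => hXsym k i₀)] at hq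
    rw [Finset.sum_const, Finset.card_univ, Fintype.card_fin, nsmul_eq_mul] at hq
    linarith [hq]
  -- E6 : 3U + X + (r-1)W = V
  have hE6 : 3 * (∑ A ∈ 𝔇, A.1 * A.2 i₀) + (∑ A ∈ 𝔇, A.2 i₀ * A.2 i₀)
      + ((r : ℤ) - 1) * (∑ A ∈ 𝔇, A.2 i₀ * A.2 i₁) = ∑ A ∈ 𝔇, A.2 i₀ := by
    have h1 : ∑ A ∈ 𝔇, A.2 i₀ * (3 * A.1 + ∑ k, A.2 k) = ∑ A ∈ 𝔇, A.2 i₀ :=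
      Finset.sum_congr rfl (fun A hA => by rw [hlinA A hA, mul_one])
    have h2 : ∀ A : ℤ × (Fin r → ℤ), A.2 i₀ * (3 * A.1 + ∑ k, A.2 k)
        = 3 * (A.1 * A.2 i₀) + ∑ k, A.2 i₀ * A.2 k := by
      intro A
      rw [mul_add, Finset.mul_sum]
      ring
    rw [Finset.sum_congr rfl (fun A _ => h2 A), Finset.sum_add_distrib,
      ← Finset.mul_sum, Finset.sum_comm] at h1
    have h3 : ∑ k : Fin r, ∑ A ∈ 𝔇, A.2 i₀ * A.2 k
        = (∑ A ∈ 𝔇, A.2 i₀ * A.2 i₀) + ((r : ℤ) - 1) * (∑ A ∈ 𝔇, A.2 i₀ * A.2 i₁) := by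
      rw [← Finset.sum_erase_add _ _ (Finset.mem_univ i₀)]
      have h4 : ∀ k ∈ Finset.univ.erase i₀, ∑ A ∈ 𝔇, A.2 i₀ * A.2 k
          = ∑ A ∈ 𝔇, A.2 i₀ * A.2 i₁ := fun k hk =>
        hWsym i₀ k i₀ i₁ (Ne.symm (Finset.mem_erase.1 hk).1) ne01
      rw [Finset.sum_congr rfl h4, Finset.sum_const,
        Finset.card_erase_of_mem (Finset.mem_univ i₀), Finset.card_univ, Fintype.card_fin]
      have hcast : ((r - 1 : ℕ) : ℤ) = (r:ℤ) - 1 := by omega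
      rw [nsmul_eq_mul, hcast]
      ring
    rw [h3] at h1
    linarith [h1]
  -- Reflection ρ in the root H - E_{i₀} - E_{i₁} - E_{i₂}
  set ρ : (ℤ × (Fin r → ℤ)) → (ℤ × (Fin r → ℤ)) := fun A =>
    (A.1 + (A.1 + A.2 i₀ + A.2 i₁ + A.2 i₂),
      fun k => A.2 k - (if k = i₀ ∨ k = i₁ ∨ k = i₂ then (A.1 + A.2 i₀ + A.2 i₁ + A.2 i₂) else 0))
    with hρ
  have ρ1 : ∀ A : ℤ × (Fin r → ℤ), (ρ A).1 = A.1 + (A.1 + A.2 i₀ + A.2 i₁ + A.2 i₂) :=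
    fun A => rfl
  have ρ2 : ∀ (A : ℤ × (Fin r → ℤ)) (k : Fin r), (ρ A).2 k
      = A.2 k - (if k = i₀ ∨ k = i₁ ∨ k = i₂ then (A.1 + A.2 i₀ + A.2 i₁ + A.2 i₂) else 0) :=
    fun A k => rfl
  have c0 : (i₀ = i₀ ∨ i₀ = i₁ ∨ i₀ = i₂) := Or.inl rfl
  have c1 : (i₁ = i₀ ∨ i₁ = i₁ ∨ i₁ = i₂) := Or.inr (Or.inl rfl)
  have c2 : (i₂ = i₀ ∨ i₂ = i₁ ∨ i₂ = i₂) := Or.inr (Or.inr rfl)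
  have c3 : ¬ (i₃ = i₀ ∨ i₃ = i₁ ∨ i₃ = i₂) := by
    simp [Ne.symm ne03, Ne.symm ne13, Ne.symm ne23]
  have hcondsum : ∀ (v : Fin r → ℤ),
      ∑ k, (if k = i₀ ∨ k = i₁ ∨ k = i₂ then v k else 0) = v i₀ + v i₁ + v i₂ := by
    intro v
    have e : ∀ k : Fin r, (if k = i₀ ∨ k = i₁ ∨ k = i₂ then v k else 0)
        = (if k ∈ ({i₀, i₁, i₂} : Finset (Fin r)) then v k else 0) := by
      intro k
      simp [Finset.mem_insert, Finset.mem_singleton]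
    rw [Finset.sum_congr rfl (fun k _ => e k), Finset.sum_ite_mem, Finset.univ_inter,
      Finset.sum_insert (by simp [ne01, ne02]), Finset.sum_insert (by simp [ne12]),
      Finset.sum_singleton]
    ring
  have hρsum : ∀ A : ℤ × (Fin r → ℤ), ∑ k, (ρ A).2 k
      = (∑ k, A.2 k) - 3 * (A.1 + A.2 i₀ + A.2 i₁ + A.2 i₂) := by
    intro A
    rw [Finset.sum_congr rfl (fun k (_ : k ∈ Finset.univ) => ρ2 A k), Finset.sum_sub_distrib,
      hcondsum (fun _ => (A.1 + A.2 i₀ + A.2 i₁ + A.2 i₂))]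
    ring
  have hρsq : ∀ A : ℤ × (Fin r → ℤ), ∑ k, (ρ A).2 k * (ρ A).2 k
      = (∑ k, A.2 k * A.2 k)
        - 2 * (A.1 + A.2 i₀ + A.2 i₁ + A.2 i₂) * (A.2 i₀ + A.2 i₁ + A.2 i₂)
        + 3 * ((A.1 + A.2 i₀ + A.2 i₁ + A.2 i₂) * (A.1 + A.2 i₀ + A.2 i₁ + A.2 i₂)) := by
    intro A
    have e : ∀ k : Fin r, (ρ A).2 k * (ρ A).2 k = A.2 k * A.2 k +
        (if k = i₀ ∨ k = i₁ ∨ k = i₂ then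
          ((A.1 + A.2 i₀ + A.2 i₁ + A.2 i₂) * (A.1 + A.2 i₀ + A.2 i₁ + A.2 i₂)
            - 2 * (A.1 + A.2 i₀ + A.2 i₁ + A.2 i₂) * A.2 k) else 0) := by
      intro k
      by_cases hk : (k = i₀ ∨ k = i₁ ∨ k = i₂)
      · rw [ρ2 A k, if_pos hk, if_pos hk]; ring
      · rw [ρ2 A k, if_neg hk, if_neg hk]; ring
    rw [Finset.sum_congr rfl (fun k (_ : k ∈ Finset.univ) => e k), Finset.sum_add_distrib,
      hcondsum (fun k => ((A.1 + A.2 i₀ + A.2 i₁ + A.2 i₂) * (A.1 + A.2 i₀ + A.2 i₁ + A.2 i₂)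
        - 2 * (A.1 + A.2 i₀ + A.2 i₁ + A.2 i₂) * A.2 k))]
    ring
  have hρmem : ∀ A ∈ 𝔇, ρ A ∈ 𝔇 := by
    intro A hA
    rw [hmem] at hA ⊢
    rcases hA with ⟨hq, hl⟩ | ⟨h8, hAc⟩
    · left
      constructor
      · rw [hρsq A, ρ1 A]
        linear_combination hq
      · rw [hρsum A, ρ1 A]
        linear_combination hl
    · right
      refine ⟨h8, ?_⟩
      rw [hAc]
      apply Prod.ext
      · rw [ρ1]
        norm_num
      · funext k
        rw [ρ2]
        dsimp only
        by_cases hk : (k = i₀ ∨ k = i₁ ∨ k = i₂)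
        · rw [if_pos hk]; ring
        · rw [if_neg hk]; ring
  have hT : ∀ A : ℤ × (Fin r → ℤ),
      (ρ A).1 + (ρ A).2 i₀ + (ρ A).2 i₁ + (ρ A).2 i₂
        = -(A.1 + A.2 i₀ + A.2 i₁ + A.2 i₂) := by
    intro A
    rw [ρ1 A, ρ2 A i₀, ρ2 A i₁, ρ2 A i₂, if_pos c0, if_pos c1, if_pos c2]
    ring
  have hρinvol : ∀ A : ℤ × (Fin r → ℤ), ρ (ρ A) = A := by
    intro A
    apply Prod.ext
    · rw [ρ1 (ρ A)]
      have h2 := hT A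
      rw [ρ1 A] at h2 ⊢
      linarith [h2]
    · funext k
      by_cases hk : (k = i₀ ∨ k = i₁ ∨ k = i₂)
      · rw [ρ2 (ρ A) k, if_pos hk, hT A, ρ2 A k, if_pos hk]
        ring
      · rw [ρ2 (ρ A) k, if_neg hk, ρ2 A k, if_neg hk]
        ring
  have ρinv : ∀ f : (ℤ × (Fin r → ℤ)) → ℤ, ∑ A ∈ 𝔇, f (ρ A) = ∑ A ∈ 𝔇, f A :=
    key ρ hρinvol hρmem
  -- E3 : Q + 3V = 0
  have hE3 : (∑ A ∈ 𝔇, A.1) + 3 * (∑ A ∈ 𝔇, A.2 i₀) = 0 := by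
    have h := ρinv (fun B => B.1)
    have h2 : ∑ A ∈ 𝔇, (ρ A).1
        = ∑ A ∈ 𝔇, (A.1 + (A.1 + A.2 i₀ + A.2 i₁ + A.2 i₂)) :=
      Finset.sum_congr rfl (fun A _ => ρ1 A)
    have h3 := h2.symm.trans h
    simp only [Finset.sum_add_distrib] at h3
    linarith [h3, hVsym i₁ i₀, hVsym i₂ i₀]
  -- E4 : U + 3W = 0
  have hE4 : (∑ A ∈ 𝔇, A.1 * A.2 i₀) + 3 * (∑ A ∈ 𝔇, A.2 i₀ * A.2 i₁) = 0 := by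
    have h := ρinv (fun B => B.1 * B.2 i₃)
    have h2 : ∑ A ∈ 𝔇, (ρ A).1 * (ρ A).2 i₃
        = ∑ A ∈ 𝔇, (2 * (A.1 * A.2 i₃) + A.2 i₀ * A.2 i₃ + A.2 i₁ * A.2 i₃ + A.2 i₂ * A.2 i₃) :=
      Finset.sum_congr rfl (fun A _ => by rw [ρ1 A, ρ2 A i₃, if_neg c3]; ring)
    have h3 := h2.symm.trans h
    simp only [Finset.sum_add_distrib, ← Finset.mul_sum] at h3
    linarith [h3, hUsym i₃ i₀, hWsym i₀ i₃ i₀ i₁ ne03 ne01, hWsym i₁ i₃ i₀ i₁ ne13 ne01,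
      hWsym i₂ i₃ i₀ i₁ ne23 ne01]
  -- E5 : 3P + 12U + 3X + 6W = 0
  have hE5 : 3 * (∑ A ∈ 𝔇, A.1 * A.1) + 12 * (∑ A ∈ 𝔇, A.1 * A.2 i₀)
      + 3 * (∑ A ∈ 𝔇, A.2 i₀ * A.2 i₀) + 6 * (∑ A ∈ 𝔇, A.2 i₀ * A.2 i₁) = 0 := by
    have h := ρinv (fun B => B.1 * B.1)
    have h2 : ∑ A ∈ 𝔇, (ρ A).1 * (ρ A).1
        = ∑ A ∈ 𝔇, (4 * (A.1 * A.1) + 4 * (A.1 * A.2 i₀) + 4 * (A.1 * A.2 i₁) + 4 * (A.1 * A.2 i₂)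
          + A.2 i₀ * A.2 i₀ + A.2 i₁ * A.2 i₁ + A.2 i₂ * A.2 i₂
          + 2 * (A.2 i₀ * A.2 i₁) + 2 * (A.2 i₀ * A.2 i₂) + 2 * (A.2 i₁ * A.2 i₂)) :=
      Finset.sum_congr rfl (fun A _ => by rw [ρ1 A]; ring)
    have h3 := h2.symm.trans h
    simp only [Finset.sum_add_distrib, ← Finset.mul_sum] at h3
    linarith [h3, hUsym i₁ i₀, hUsym i₂ i₀, hXsym i₁ i₀, hXsym i₂ i₀,
      hWsym i₀ i₂ i₀ i₁ ne02 ne01, hWsym i₁ i₂ i₀ i₁ ne12 ne01]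
  -- the target sum
  have hTj : (∑ A ∈ 𝔇, ((inter A (EE j) : ℚ)) * (inter A HH : ℚ) / 3)
      = -(((∑ A ∈ 𝔇, A.1 * A.2 i₀ : ℤ) : ℚ)) / 3 := by
    have hAE : ∀ A : ℤ × (Fin r → ℤ), inter A (EE j) = -(A.2 j) := by
      intro A
      rw [hinter, hEE j]
      dsimp only
      rw [mul_zero, zero_sub]
      congr 1
      have e : ∀ k : Fin r, A.2 k * (if k = j then (1:ℤ) else 0) = (if k = j then A.2 k else 0) := by
        intro k
        by_cases hk : k = j <;> simp [hk]
      rw [Finset.sum_congr rfl (fun k _ => e k), Finset.sum_ite_eq']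
      simp
    have hAH : ∀ A : ℤ × (Fin r → ℤ), inter A HH = A.1 := by
      intro A
      rw [hinter, hHH]
      dsimp only
      simp
    calc ∑ A ∈ 𝔇, ((inter A (EE j) : ℚ)) * (inter A HH : ℚ) / 3
        = ∑ A ∈ 𝔇, ((-(A.1 * A.2 j) : ℤ) : ℚ) / 3 :=
          Finset.sum_congr rfl (fun A _ => by rw [hAE A, hAH A]; push_cast; ring)
      _ = ((∑ A ∈ 𝔇, -(A.1 * A.2 j) : ℤ) : ℚ) / 3 := by
          rw [← Finset.sum_div]
          norm_cast
      _ = -(((∑ A ∈ 𝔇, A.1 * A.2 i₀ : ℤ) : ℚ)) / 3 := by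
          rw [Finset.sum_neg_distrib, hUsym j i₀]
          push_cast
          ring
  -- lower bound on the cardinality
  have hNlow : (if r = 8 then 92 else r.choose 1 + r.choose 2 : ℕ) ≤ 𝔇.card := by
    by_cases h8 : r = 8
    · rw [if_pos h8]
      subst h8
      exact aux_card_lower8 𝔇 (fun A hA => (hmem A).2 (Or.inl hA))
    · rw [if_neg h8]
      exact aux_card_lower r 𝔇 (fun A hA => (hmem A).2 (Or.inl hA))
  rw [hTj]
  clear hTj hlinA hWsym hWswap hXsym hUsym hVsym swapinv key hmem ρinv hρinvol hT hρmem
    hρsq hρsum hcondsum c0 c1 c2 c3 ρ1 ρ2 h𝔇 hinter hHH hEE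
  interval_cases r
  · rw [show (if (4:ℕ) = 8 then 92 else Nat.choose 4 1 + Nat.choose 4 2) = 10 by decide] at hNlow
    rw [if_neg (by decide : ¬ (4:ℕ) = 8)] at hE1
    have hU : (∑ A ∈ 𝔇, A.1 * A.2 i₀) ≤ -3 := by omega
    have hUq : ((∑ A ∈ 𝔇, A.1 * A.2 i₀ : ℤ) : ℚ) ≤ -3 := by exact_mod_cast hU
    norm_num
    push_cast at hUq
    constructor <;> linarith
  · rw [show (if (5:ℕ) = 8 then 92 else Nat.choose 5 1 + Nat.choose 5 2) = 15 by decide] at hNlow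
    rw [if_neg (by decide : ¬ (5:ℕ) = 8)] at hE1
    have hU : (∑ A ∈ 𝔇, A.1 * A.2 i₀) ≤ -6 := by omega
    have hUq : ((∑ A ∈ 𝔇, A.1 * A.2 i₀ : ℤ) : ℚ) ≤ -6 := by exact_mod_cast hU
    norm_num
    push_cast at hUq
    constructor <;> linarith
  · rw [show (if (6:ℕ) = 8 then 92 else Nat.choose 6 1 + Nat.choose 6 2) = 21 by decide] at hNlow
    rw [if_neg (by decide : ¬ (6:ℕ) = 8)] at hE1
    have hU : (∑ A ∈ 𝔇, A.1 * A.2 i₀) ≤ -12 := by omega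
    have hUq : ((∑ A ∈ 𝔇, A.1 * A.2 i₀ : ℤ) : ℚ) ≤ -12 := by exact_mod_cast hU
    norm_num
    push_cast at hUq
    constructor <;> linarith
  · rw [show (if (7:ℕ) = 8 then 92 else Nat.choose 7 1 + Nat.choose 7 2) = 28 by decide] at hNlow
    rw [if_neg (by decide : ¬ (7:ℕ) = 8)] at hE1
    have hU : (∑ A ∈ 𝔇, A.1 * A.2 i₀) ≤ -30 := by omega
    have hUq : ((∑ A ∈ 𝔇, A.1 * A.2 i₀ : ℤ) : ℚ) ≤ -30 := by exact_mod_cast hU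
    norm_num
    push_cast at hUq
    constructor <;> linarith
  · rw [show (if (8:ℕ) = 8 then 92 else Nat.choose 8 1 + Nat.choose 8 2) = 92 by decide] at hNlow
    rw [if_pos (by decide : (8:ℕ) = 8)] at hE1
    have hU : (∑ A ∈ 𝔇, A.1 * A.2 i₀) ≤ -345 := by omega
    have hUq : ((∑ A ∈ 𝔇, A.1 * A.2 i₀ : ℤ) : ℚ) ≤ -345 := by exact_mod_cast hU
    norm_num
    push_cast at hUq
    constructor <;> linarith
end
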